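/- arXiv:2504.06488 — 7 statements merged into one kernel-verified Lean document; each statement's English description precedes it below -/
import Mathlib

section
/- Let d ≥ 2 and let ω : [0,∞) → [0,∞) be continuous, strictly increasing, convex, with ω(0) = 0, such that r ↦ ω(r)/r^d is monotone decreasing on (0,∞), and suppose ∫_0^1 ω(r)^{-1/d} dr < ∞. Then there exist a set A ⊆ ℝ^d and a function f : A → ℝ with modulus of continuity ω such that f(A) has positive Lebesgue measure. -/
open MeasureTheory Set
open scoped ENNReal NNReal

private lemma bits_differ {d m m' : ℕ} (hm : m < 2 ^ d) (hm' : m' < 2 ^ d) (hne : m ≠ m') :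
    ∃ i : Fin d, Nat.testBit m i.val ≠ Nat.testBit m' i.val := by
  by_contra h
  push_neg at h
  apply hne
  apply Nat.eq_of_testBit_eq
  intro i
  by_cases hi : i < d
  · exact h ⟨i, hi⟩
  · push_neg at hi
    have h2 : (2:ℕ) ^ d ≤ 2 ^ i := Nat.pow_le_pow_right (by norm_num) hi
    rw [Nat.testBit_eq_false_of_lt (lt_of_lt_of_le hm h2),
        Nat.testBit_eq_false_of_lt (lt_of_lt_of_le hm' h2)]

/-- The geometric construction: given a summable sequence `2^l * ψ l`, there is a map
`P : [0,1) → ℝ^d` such that distinct parameters `u, v` admit a scale `k` with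
`‖P u - P v‖ ≥ ψ k` while `|u - v| ≤ (2^d)^{-k}`. -/
private theorem lemmaA (d : ℕ) (hd : 1 ≤ d) (ψ : ℕ → ℝ) (hpos : ∀ k, 0 < ψ k)
    (hsum : Summable (fun l => (2:ℝ) ^ l * ψ l)) :
    ∃ P : ℝ → EuclideanSpace ℝ (Fin d),
      ∀ u ∈ Ico (0:ℝ) 1, ∀ v ∈ Ico (0:ℝ) 1, u ≠ v →
        ∃ k : ℕ, ψ k ≤ ‖P u - P v‖ ∧ |u - v| ≤ (((2^d : ℕ) : ℝ))⁻¹ ^ k := by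
  set N : ℕ := 2 ^ d with hN_def
  have hN2 : 2 ≤ N := by
    calc (2:ℕ) = 2^1 := (pow_one 2).symm
    _ ≤ 2^d := Nat.pow_le_pow_right (by norm_num) hd
  have hNR : (2:ℝ) ≤ (N:ℝ) := by exact_mod_cast hN2
  have hNR0 : (0:ℝ) < (N:ℝ) := by linarith
  -- the level sums
  set h : ℕ → ℝ := fun l => (2:ℝ) ^ l * ψ l with hh_def
  have hh_pos : ∀ l, 0 < h l := fun l => by
    have := hpos l; positivity
  have hsum_tail : ∀ k, Summable fun n => h (n + k) :=
    fun k => (summable_nat_add_iff k).mpr hsum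
  set R : ℕ → ℝ := fun k => ∑' n, h (n + k) with hR_def
  have hRrec : ∀ k, R k = h k + R (k + 1) := by
    intro k
    have h0 := Summable.tsum_eq_zero_add (hsum_tail k)
    rw [hR_def]
    simp only []
    rw [h0, zero_add]
    congr 1
    apply tsum_congr
    intro n
    congr 1
    omega
  have hR_nonneg : ∀ k, 0 ≤ R k := fun k => tsum_nonneg (fun n => (hh_pos _).le)
  have hR_anti : Antitone R := by
    apply antitone_nat_of_succ_le
    intro k
    rw [hRrec k]
    linarith [hh_pos k]
  set g : ℕ → ℝ := fun k => ((2:ℝ)⁻¹) ^ k * R k with hg_def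
  have hg_nonneg : ∀ k, 0 ≤ g k := fun k => by
    have := hR_nonneg k; positivity
  have hg_sum : Summable g := by
    apply Summable.of_nonneg_of_le hg_nonneg
      (fun k => mul_le_mul_of_nonneg_left (hR_anti (Nat.zero_le k)) (by positivity))
    exact (summable_geometric_of_lt_one (by norm_num) (by norm_num)).mul_right (R 0)
  have htail : ∀ k, ∑' n, g (n + (k + 1)) ≤ ((2:ℝ)⁻¹) ^ k * R (k + 1) := by
    intro k
    have h1 : ∀ n, g (n + (k + 1)) ≤ ((2:ℝ)⁻¹) ^ (n + (k + 1)) * R (k + 1) := by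
      intro n
      exact mul_le_mul_of_nonneg_left (hR_anti (Nat.le_add_left _ _)) (by positivity)
    have h2 : Summable fun n => ((2:ℝ)⁻¹) ^ (n + (k + 1)) * R (k + 1) := by
      have heq : (fun n => ((2:ℝ)⁻¹) ^ (n + (k + 1)) * R (k + 1))
          = fun n => ((2:ℝ)⁻¹) ^ n * (((2:ℝ)⁻¹) ^ (k+1) * R (k + 1)) := by
        funext n; rw [pow_add]; ring
      rw [heq]
      exact (summable_geometric_of_lt_one (by norm_num) (by norm_num)).mul_right _
    have h3 := Summable.tsum_le_tsum h1 ((summable_nat_add_iff (k+1)).mpr hg_sum) h2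
    apply le_trans h3
    have h4 : ∀ n, ((2:ℝ)⁻¹) ^ (n + (k + 1)) * R (k + 1) =
        ((2:ℝ)⁻¹) ^ n * (((2:ℝ)⁻¹) ^ (k + 1) * R (k + 1)) := by
      intro n; rw [pow_add]; ring
    rw [tsum_congr h4, tsum_mul_right, tsum_geometric_of_lt_one (by norm_num) (by norm_num)]
    have : ((1:ℝ) - 2⁻¹)⁻¹ = 2 := by norm_num
    rw [this, pow_succ]
    ring_nf
    exact le_refl _
  have hkey : ∀ k, ψ k ≤ g k - ∑' n, g (n + (k + 1)) := by
    intro k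
    have h1 : g k - ((2:ℝ)⁻¹) ^ k * R (k + 1) = ψ k := by
      rw [hg_def]
      simp only []
      rw [← mul_sub]
      rw [hRrec k]
      have h2 : h k + R (k+1) - R (k+1) = h k := by ring
      rw [h2, hh_def]
      simp only []
      rw [← mul_assoc, ← mul_pow]
      norm_num
    linarith [htail k]
  -- digits
  set b : ℝ → ℕ → ℕ := fun v k => ⌊v * (N:ℝ) ^ (k+1)⌋₊ - N * ⌊v * (N:ℝ) ^ k⌋₊ with hb_def
  have hfloor : ∀ v ∈ Ico (0:ℝ) 1, ∀ k,
      ⌊v * (N:ℝ) ^ (k+1)⌋₊ = N * ⌊v * (N:ℝ) ^ k⌋₊ + b v k ∧ b v k < N := by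
    intro v hv k
    have hvnn : 0 ≤ v := hv.1
    have h1 : ((⌊v * (N:ℝ) ^ k⌋₊ : ℕ) : ℝ) ≤ v * (N:ℝ) ^ k :=
      Nat.floor_le (mul_nonneg hvnn (by positivity))
    have h2 : v * (N:ℝ) ^ k < (⌊v * (N:ℝ) ^ k⌋₊ : ℕ) + 1 := Nat.lt_floor_add_one _
    have h3 : ((N * ⌊v * (N:ℝ) ^ k⌋₊ : ℕ) : ℝ) ≤ v * (N:ℝ) ^ (k+1) := by
      push_cast
      calc (N:ℝ) * ⌊v * (N:ℝ) ^ k⌋₊ ≤ (N:ℝ) * (v * (N:ℝ)^k) := by nlinarith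
      _ = v * (N:ℝ)^(k+1) := by ring
    have h4 : v * (N:ℝ) ^ (k+1) < ((N * ⌊v * (N:ℝ) ^ k⌋₊ + N : ℕ) : ℝ) := by
      push_cast
      calc v * (N:ℝ)^(k+1) = (N:ℝ) * (v * (N:ℝ)^k) := by ring
      _ < (N:ℝ) * ((⌊v * (N:ℝ) ^ k⌋₊ : ℕ) + 1) := by nlinarith
      _ = (N:ℝ) * ⌊v * (N:ℝ) ^ k⌋₊ + N := by ring
    have h5 : N * ⌊v * (N:ℝ) ^ k⌋₊ ≤ ⌊v * (N:ℝ) ^ (k+1)⌋₊ := Nat.le_floor h3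
    have h6 : ⌊v * (N:ℝ) ^ (k+1)⌋₊ < N * ⌊v * (N:ℝ) ^ k⌋₊ + N := by
      rw [← Nat.floor_lt (mul_nonneg hvnn (by positivity))] at h4
      exact h4
    constructor
    · simp only [hb_def]; omega
    · simp only [hb_def]; omega
  have hfeq : ∀ u ∈ Ico (0:ℝ) 1, ∀ v ∈ Ico (0:ℝ) 1, ∀ k : ℕ,
      (∀ j, j < k → b u j = b v j) → ⌊u * (N:ℝ) ^ k⌋₊ = ⌊v * (N:ℝ) ^ k⌋₊ := by
    intro u hu v hv k
    induction k with
    | zero =>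
      intro _
      rw [pow_zero, mul_one, mul_one, Nat.floor_eq_zero.mpr hu.2, Nat.floor_eq_zero.mpr hv.2]
    | succ k ih =>
      intro hdig
      have h1 := (hfloor u hu k).1
      have h2 := (hfloor v hv k).1
      rw [h1, h2, ih (fun j hj => hdig j (Nat.lt_succ_of_lt hj)), hdig k (Nat.lt_succ_self k)]
  have hclose : ∀ u ∈ Ico (0:ℝ) 1, ∀ v ∈ Ico (0:ℝ) 1, ∀ k : ℕ,
      ⌊u * (N:ℝ) ^ k⌋₊ = ⌊v * (N:ℝ) ^ k⌋₊ → |u - v| ≤ ((N:ℝ))⁻¹ ^ k := by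
    intro u hu v hv k heq
    have h1 : ((⌊u * (N:ℝ) ^ k⌋₊ : ℕ) : ℝ) ≤ u * (N:ℝ) ^ k :=
      Nat.floor_le (mul_nonneg hu.1 (by positivity))
    have h2 : u * (N:ℝ) ^ k < (⌊u * (N:ℝ) ^ k⌋₊ : ℕ) + 1 := Nat.lt_floor_add_one _
    have h3 : ((⌊u * (N:ℝ) ^ k⌋₊ : ℕ) : ℝ) ≤ v * (N:ℝ) ^ k := by
      rw [heq]; exact Nat.floor_le (mul_nonneg hv.1 (by positivity))
    have h4 : v * (N:ℝ) ^ k < (⌊u * (N:ℝ) ^ k⌋₊ : ℕ) + 1 := by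
      rw [heq]; exact Nat.lt_floor_add_one _
    have hNk : (0:ℝ) < (N:ℝ) ^ k := by positivity
    have h5 : |u - v| * (N:ℝ) ^ k < 1 := by
      have habs : |u - v| * (N:ℝ)^k = |u * (N:ℝ)^k - v * (N:ℝ)^k| := by
        rw [← sub_mul, abs_mul, abs_of_pos hNk]
      rw [habs, abs_lt]
      constructor <;> nlinarith
    rw [inv_pow, ← one_div]
    exact le_of_lt ((lt_div_iff₀ hNk).mpr h5)
  have hallEq : ∀ u ∈ Ico (0:ℝ) 1, ∀ v ∈ Ico (0:ℝ) 1, (∀ k, b u k = b v k) → u = v := by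
    intro u hu v hv hall
    by_contra hne
    have habs : 0 < |u - v| := abs_pos.mpr (sub_ne_zero.mpr hne)
    obtain ⟨n, hn⟩ := exists_pow_lt_of_lt_one habs
      (by rw [inv_lt_one_iff₀]; right; linarith : ((N:ℝ))⁻¹ < 1)
    have h1 := hclose u hu v hv n (hfeq u hu v hv n (fun j _ => hall j))
    linarith
  -- bit vectors
  set w : ℕ → Fin d → ℝ := fun m i => if Nat.testBit m i.val then (1:ℝ) else 0 with hw_def
  have hw0 : ∀ m i, 0 ≤ w m i := by
    intro m i; simp only [hw_def]; split <;> norm_num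
  have hw1 : ∀ m i, w m i ≤ 1 := by
    intro m i; simp only [hw_def]; split <;> norm_num
  have hPsummand : ∀ (v : ℝ) (i : Fin d), Summable (fun k => g k * w (b v k) i) := by
    intro v i
    apply Summable.of_nonneg_of_le (fun k => mul_nonneg (hg_nonneg k) (hw0 _ i))
      (fun k => by
        calc g k * w (b v k) i ≤ g k * 1 :=
              mul_le_mul_of_nonneg_left (hw1 _ i) (hg_nonneg k)
        _ = g k := mul_one _) hg_sum
  set P : ℝ → EuclideanSpace ℝ (Fin d) :=
    fun v => (WithLp.equiv 2 (Fin d → ℝ)).symm (fun i => ∑' k, g k * w (b v k) i) with hP_def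
  have hPapp : ∀ (v : ℝ) (i : Fin d), P v i = ∑' k, g k * w (b v k) i := by
    intro v i
    rfl
  refine ⟨P, ?_⟩
  intro u hu v hv hne
  have hexk : ∃ k, b u k ≠ b v k := by
    by_contra hcon
    push_neg at hcon
    exact hne (hallEq u hu v hv hcon)
  set k : ℕ := Nat.find hexk with hk_def
  have hk : b u k ≠ b v k := Nat.find_spec hexk
  have hmin : ∀ j, j < k → b u j = b v j := fun j hj => of_not_not (Nat.find_min hexk hj)
  have hbuk : b u k < N := (hfloor u hu k).2
  have hbvk : b v k < N := (hfloor v hv k).2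
  obtain ⟨i₀, hbit⟩ := bits_differ (hN_def ▸ hbuk) (hN_def ▸ hbvk) hk
  have hwdiff : |w (b u k) i₀ - w (b v k) i₀| = 1 := by
    simp only [hw_def]
    cases hbu : Nat.testBit (b u k) i₀.val <;> cases hbv : Nat.testBit (b v k) i₀.val
    · exfalso; rw [hbu, hbv] at hbit; exact hbit rfl
    · norm_num
    · norm_num
    · exfalso; rw [hbu, hbv] at hbit; exact hbit rfl
  -- coordinate estimate
  set F : ℕ → ℝ := fun j => g j * w (b u j) i₀ - g j * w (b v j) i₀ with hF_def
  have hFsummable : Summable F := (hPsummand u i₀).sub (hPsummand v i₀)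
  have htsumF : P u i₀ - P v i₀ = ∑' j, F j := by
    rw [hPapp u i₀, hPapp v i₀, ← Summable.tsum_sub (hPsummand u i₀) (hPsummand v i₀)]
  have hsplit := Summable.sum_add_tsum_nat_add (k+1) hFsummable
  have hrange : ∑ j ∈ Finset.range (k+1), F j = F k := by
    apply Finset.sum_eq_single_of_mem k (Finset.self_mem_range_succ k)
    intro j hj hjk
    have hjlt : j < k := by
      rw [Finset.mem_range] at hj; omega
    simp only [hF_def, hmin j hjlt, sub_self]
  have hFk : |F k| = g k * |w (b u k) i₀ - w (b v k) i₀| := by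
    rw [hF_def]
    simp only []
    rw [← mul_sub, abs_mul, abs_of_nonneg (hg_nonneg k)]
  have hFkval : |F k| = g k := by rw [hFk, hwdiff, mul_one]
  have htailbd : |∑' n, F (n + (k+1))| ≤ ∑' n, g (n + (k+1)) := by
    have hsumtail : Summable fun n => F (n + (k+1)) := (summable_nat_add_iff (k+1)).mpr hFsummable
    have h1 : ∀ n, ‖F (n + (k+1))‖ ≤ g (n + (k+1)) := by
      intro n
      rw [Real.norm_eq_abs, hF_def]
      simp only []
      rw [← mul_sub, abs_mul, abs_of_nonneg (hg_nonneg _)]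
      calc g (n+(k+1)) * |w (b u (n+(k+1))) i₀ - w (b v (n+(k+1))) i₀| ≤ g (n+(k+1)) * 1 := by
            apply mul_le_mul_of_nonneg_left _ (hg_nonneg _)
            rw [abs_le]
            constructor
            · linarith [hw0 (b u (n+(k+1))) i₀, hw1 (b v (n+(k+1))) i₀]
            · linarith [hw1 (b u (n+(k+1))) i₀, hw0 (b v (n+(k+1))) i₀]
      _ = g (n+(k+1)) := mul_one _
    have h2 : Summable fun n => ‖F (n + (k+1))‖ := by
      apply Summable.of_nonneg_of_le (fun n => norm_nonneg _) h1
      exact (summable_nat_add_iff (k+1)).mpr hg_sum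
    calc |∑' n, F (n + (k+1))| = ‖∑' n, F (n + (k+1))‖ := (Real.norm_eq_abs _).symm
    _ ≤ ∑' n, ‖F (n + (k+1))‖ := norm_tsum_le_tsum_norm h2
    _ ≤ ∑' n, g (n + (k+1)) := Summable.tsum_le_tsum h1 h2 ((summable_nat_add_iff (k+1)).mpr hg_sum)
  have hcoord : ψ k ≤ |P u i₀ - P v i₀| := by
    rw [htsumF, ← hsplit, hrange]
    have h1 : |F k| - |∑' n, F (n + (k+1))| ≤ |F k + ∑' n, F (n + (k+1))| := by
      have := abs_add_le (F k + ∑' n, F (n + (k+1))) (-(∑' n, F (n + (k+1))))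
      simp only [add_neg_cancel_right, abs_neg] at this
      linarith
    have h2 := hkey k
    rw [hFkval] at h1
    linarith [htailbd]
  have hnorm : |P u i₀ - P v i₀| ≤ ‖P u - P v‖ := by
    have hsub : (P u - P v) i₀ = P u i₀ - P v i₀ := rfl
    rw [EuclideanSpace.norm_eq]
    have h1 : ‖(P u - P v) i₀‖ ^ 2 ≤ ∑ i, ‖(P u - P v) i‖ ^ 2 :=
      Finset.single_le_sum (f := fun i => ‖(P u - P v) i‖ ^ 2)
        (fun i _ => by positivity) (Finset.mem_univ i₀)
    calc |P u i₀ - P v i₀| = Real.sqrt (‖(P u - P v) i₀‖ ^ 2) := by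
          rw [Real.sqrt_sq (norm_nonneg _), hsub, Real.norm_eq_abs]
    _ ≤ Real.sqrt (∑ i, ‖(P u - P v) i‖ ^ 2) := Real.sqrt_le_sqrt h1
  refine ⟨k, le_trans hcoord hnorm, ?_⟩
  exact hclose u hu v hv k (hfeq u hu v hv k hmin)

/-- The analytic part: from finiteness of the integral, produce a scale sequence `ψ`. -/
private theorem lemmaB (d : ℕ) (hd : 1 ≤ d) (ω : ℝ → ℝ)
    (hω_cont : ContinuousOn ω (Ici (0:ℝ)))
    (hω_mono : StrictMonoOn ω (Ici (0:ℝ)))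
    (hω_zero : ω 0 = 0)
    (hint : ∫⁻ t in Ioc (0 : ℝ) 1, ENNReal.ofReal (ω t ^ (-(1 / (d : ℝ)))) < ⊤) :
    ∃ c : ℝ, 0 < c ∧ c ≤ 1 ∧ ∃ ψ : ℕ → ℝ,
      (∀ j, 0 < ψ j) ∧ (∀ j, ω (ψ j) = c * (((2^d : ℕ) : ℝ))⁻¹ ^ j) ∧
      Summable (fun l => (2:ℝ) ^ l * ψ l) := by
  have hd0 : (d:ℝ) ≠ 0 := Nat.cast_ne_zero.mpr (by omega)
  have hω1 : 0 < ω 1 := by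
    have := hω_mono (mem_Ici.mpr le_rfl) (mem_Ici.mpr zero_le_one) zero_lt_one
    rwa [hω_zero] at this
  set c : ℝ := min (ω 1) 1 with hc_def
  have hc : 0 < c := lt_min hω1 zero_lt_one
  have hc1 : c ≤ 1 := min_le_right _ _
  have hcω : c ≤ ω 1 := min_le_left _ _
  set q : ℝ := (((2^d : ℕ) : ℝ))⁻¹ with hq_def
  have hN2 : (2:ℝ) ≤ ((2^d : ℕ) : ℝ) := by
    have : (2:ℕ) ≤ 2^d := by
      calc (2:ℕ) = 2^1 := (pow_one 2).symm
      _ ≤ 2^d := Nat.pow_le_pow_right (by norm_num) hd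
    exact_mod_cast this
  have hq0 : 0 < q := by rw [hq_def]; positivity
  have hq1 : q < 1 := by
    rw [hq_def, inv_lt_one_iff₀]
    right; linarith
  -- existence of the inverse values ψ j
  have hex : ∀ j : ℕ, ∃ r : ℝ, (0 < r ∧ r ≤ 1) ∧ ω r = c * q ^ j := by
    intro j
    have hs0 : 0 < c * q ^ j := by positivity
    have hs1 : c * q ^ j ≤ ω 1 := by
      have : q ^ j ≤ 1 := pow_le_one₀ hq0.le hq1.le
      nlinarith
    have hIVT := intermediate_value_Icc (zero_le_one) (hω_cont.mono Icc_subset_Ici_self)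
    have hmem : c * q ^ j ∈ Icc (ω 0) (ω 1) := by
      rw [hω_zero]; exact ⟨hs0.le, hs1⟩
    obtain ⟨r, hrIcc, hr⟩ := hIVT hmem
    refine ⟨r, ⟨?_, hrIcc.2⟩, hr⟩
    rcases eq_or_lt_of_le hrIcc.1 with h | h
    · exfalso; rw [← h, hω_zero] at hr; linarith
    · exact h
  choose ψ hψprop hψω using hex
  have hψpos : ∀ j, 0 < ψ j := fun j => (hψprop j).1
  have hψle1 : ∀ j, ψ j ≤ 1 := fun j => (hψprop j).2
  have hanti : ∀ {i j : ℕ}, i ≤ j → ψ j ≤ ψ i := by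
    intro i j hij
    by_contra h
    push_neg at h
    have h1 : ω (ψ i) < ω (ψ j) :=
      hω_mono (mem_Ici.mpr (hψpos i).le) (mem_Ici.mpr (hψpos j).le) h
    rw [hψω i, hψω j] at h1
    have h2 : q ^ j ≤ q ^ i := pow_le_pow_of_le_one hq0.le hq1.le hij
    nlinarith
  have htend : Filter.Tendsto ψ Filter.atTop (nhds 0) := by
    rw [Metric.tendsto_atTop]
    intro ε hε
    set ε' : ℝ := min ε 1 with hε'_def
    have hε'0 : 0 < ε' := lt_min hε zero_lt_one
    have hωε' : 0 < ω ε' := by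
      have := hω_mono (mem_Ici.mpr le_rfl) (mem_Ici.mpr hε'0.le) hε'0
      rwa [hω_zero] at this
    have hgeo : Filter.Tendsto (fun j : ℕ => c * q ^ j) Filter.atTop (nhds 0) := by
      have := (tendsto_pow_atTop_nhds_zero_of_lt_one hq0.le hq1).const_mul c
      simpa using this
    have hev := hgeo.eventually_lt_const hωε'
    obtain ⟨K, hK⟩ := hev.exists_forall_of_atTop
    refine ⟨K, fun j hj => ?_⟩
    have h1 : ω (ψ j) < ω ε' := by rw [hψω j]; exact hK j hj
    have h2 : ψ j < ε' := by
      by_contra h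
      push_neg at h
      have := hω_mono.monotoneOn (mem_Ici.mpr hε'0.le) (mem_Ici.mpr (hψpos j).le) h
      linarith
    rw [Real.dist_eq, sub_zero, abs_of_pos (hψpos j)]
    exact lt_of_lt_of_le h2 (min_le_left _ _)
  -- the telescoping differences
  set Δ : ℕ → ℝ := fun j => ψ j - ψ (j+1) with hΔ_def
  have hΔ0 : ∀ j, 0 ≤ Δ j := fun j => sub_nonneg.mpr (hanti (Nat.le_succ j))
  have hΔsum : Summable Δ := by
    apply summable_of_sum_range_le (c := ψ 0) hΔ0
    intro n
    rw [Finset.sum_range_sub' ψ n]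
    have := (hψpos n).le
    linarith [hψle1 0]
  have htails : ∀ j, ∑' n, Δ (n + j) = ψ j := by
    intro j
    have hS : Summable fun n => Δ (n + j) := (summable_nat_add_iff j).mpr hΔsum
    have h1 := hS.hasSum.tendsto_sum_nat
    have h2 : (fun m => ∑ n ∈ Finset.range m, Δ (n + j)) = fun m => ψ j - ψ (m + j) := by
      funext m
      have : ∀ n, Δ (n + j) = (fun n => ψ (n + j)) n - (fun n => ψ (n + j)) (n + 1) := by
        intro n
        simp only [hΔ_def]
        congr 2
        omega
      rw [Finset.sum_congr rfl (fun n _ => this n), Finset.sum_range_sub' (fun n => ψ (n + j)) m]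
      rw [zero_add]
    have h3 : Filter.Tendsto (fun m => ψ j - ψ (m + j)) Filter.atTop (nhds (ψ j - 0)) :=
      tendsto_const_nhds.sub (htend.comp (Filter.tendsto_add_atTop_nat j))
    rw [h2] at h1
    have := tendsto_nhds_unique h1 h3
    rw [this, sub_zero]
  -- lower bound for the integral on each piece
  set I : ℕ → Set ℝ := fun j => Ioc (ψ (j+1)) (ψ j) with hI_def
  have hpoint : ∀ j : ℕ, ∀ t ∈ I j, (2:ℝ)^j ≤ ω t ^ (-(1 / (d : ℝ))) := by
    intro j t ht
    have htpos : 0 < t := lt_trans (hψpos (j+1)) ht.1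
    have hωt0 : 0 < ω t := by
      have := hω_mono (mem_Ici.mpr le_rfl) (mem_Ici.mpr htpos.le) htpos
      rwa [hω_zero] at this
    have hqj : c * q ^ j ≤ ((2:ℝ)^j) ^ (-(d:ℝ)) := by
      have h1 : ((2:ℝ)^j) ^ (-(d:ℝ)) = (((2:ℝ)^j) ^ (d:ℕ))⁻¹ := by
        rw [Real.rpow_neg (by positivity), Real.rpow_natCast]
      rw [h1, ← pow_mul]
      have hcast : ((2^d : ℕ) : ℝ) = (2:ℝ)^d := by push_cast; ring
      have h2 : q ^ j = ((2:ℝ) ^ (d * j))⁻¹ := by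
        rw [hq_def, hcast, inv_pow, ← pow_mul]
      rw [mul_comm j d, ← h2]
      nlinarith [pow_nonneg hq0.le j, pow_le_one₀ hq0.le hq1.le (n := j)]
    have hωtle : ω t ≤ ((2:ℝ)^j) ^ (-(d:ℝ)) := by
      have h1 : ω t ≤ ω (ψ j) :=
        hω_mono.monotoneOn (mem_Ici.mpr htpos.le) (mem_Ici.mpr (hψpos j).le) ht.2
      rw [hψω j] at h1
      exact le_trans h1 hqj
    have hstep := Real.rpow_le_rpow_of_nonpos hωt0 hωtle (by rw [neg_nonpos]; positivity : -(1/(d:ℝ)) ≤ 0)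
    have hcalc : (((2:ℝ)^j) ^ (-(d:ℝ))) ^ (-(1/(d:ℝ))) = (2:ℝ)^j := by
      rw [← Real.rpow_natCast (2:ℝ) j, ← Real.rpow_mul (by norm_num : (0:ℝ) ≤ 2),
          ← Real.rpow_mul (by norm_num : (0:ℝ) ≤ 2)]
      congr 1
      field_simp
    rw [hcalc] at hstep
    exact hstep
  have hIsub : ∀ j, I j ⊆ Ioc (0:ℝ) 1 := by
    intro j t ht
    exact ⟨lt_trans (hψpos (j+1)) ht.1, le_trans ht.2 (hψle1 j)⟩
  have hlow : ∀ j : ℕ, (2:ℝ≥0∞)^j * ENNReal.ofReal (Δ j) ≤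
      ∫⁻ t in I j, ENNReal.ofReal (ω t ^ (-(1 / (d : ℝ)))) := by
    intro j
    have hvol : volume (I j) = ENNReal.ofReal (Δ j) := by
      rw [hI_def]; exact Real.volume_Ioc
    calc (2:ℝ≥0∞)^j * ENNReal.ofReal (Δ j) = ∫⁻ _ in I j, (2:ℝ≥0∞)^j := by
          rw [setLIntegral_const, hvol]
    _ ≤ ∫⁻ t in I j, ENNReal.ofReal (ω t ^ (-(1 / (d : ℝ)))) := by
          apply lintegral_mono_ae
          rw [ae_restrict_iff' measurableSet_Ioc]
          apply ae_of_all
          intro t ht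
          have h1 := hpoint j t ht
          calc (2:ℝ≥0∞)^j = ENNReal.ofReal ((2:ℝ)^j) := by
                rw [ENNReal.ofReal_pow (by norm_num : (0:ℝ) ≤ 2)]
                norm_num
          _ ≤ ENNReal.ofReal (ω t ^ (-(1 / (d : ℝ)))) := ENNReal.ofReal_le_ofReal h1
  have hdisj : Pairwise (Function.onFun Disjoint I) := by
    rw [pairwise_disjoint_on I]
    intro i j hij
    rw [Set.disjoint_left]
    intro x hx1 hx2
    have h1 : ψ j ≤ ψ (i+1) := hanti hij
    have h2 := hx1.1
    have h3 := hx2.2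
    simp only [hI_def, mem_Ioc] at hx1 hx2
    linarith [hx1.1, hx2.2]
  set Sum2 : ℝ≥0∞ := ∑' m, (2:ℝ≥0∞)^m * ENNReal.ofReal (Δ m) with hSum2_def
  have hSum2top : Sum2 ≠ ⊤ := by
    have h1 : Sum2 ≤ ∫⁻ t in Ioc (0:ℝ) 1, ENNReal.ofReal (ω t ^ (-(1 / (d : ℝ)))) := by
      calc Sum2 ≤ ∑' j, ∫⁻ t in I j, ENNReal.ofReal (ω t ^ (-(1 / (d : ℝ)))) :=
            ENNReal.tsum_le_tsum hlow
      _ = ∫⁻ t in ⋃ j, I j, ENNReal.ofReal (ω t ^ (-(1 / (d : ℝ)))) :=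
            (lintegral_iUnion (fun j => measurableSet_Ioc) hdisj _).symm
      _ ≤ ∫⁻ t in Ioc (0:ℝ) 1, ENNReal.ofReal (ω t ^ (-(1 / (d : ℝ)))) :=
            lintegral_mono_set (iUnion_subset hIsub)
    exact ne_top_of_le_ne_top hint.ne h1
  -- summability of 2^l ψ l
  have hofψ : ∀ j, ENNReal.ofReal (ψ j) = ∑' n, ENNReal.ofReal (Δ (n + j)) := by
    intro j
    rw [← htails j]
    exact ENNReal.ofReal_tsum_of_nonneg (fun n => hΔ0 _) ((summable_nat_add_iff j).mpr hΔsum)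
  have hmain : ∑' j, ENNReal.ofReal ((2:ℝ)^j * ψ j) ≤ 2 * Sum2 := by
    have hterm : ∀ j : ℕ, ENNReal.ofReal ((2:ℝ)^j * ψ j) =
        ∑' n, (2:ℝ≥0∞)⁻¹^n * ((2:ℝ≥0∞)^(n+j) * ENNReal.ofReal (Δ (n + j))) := by
      intro j
      rw [ENNReal.ofReal_mul (by positivity), hofψ j]
      have h2 : ENNReal.ofReal ((2:ℝ)^j) = (2:ℝ≥0∞)^j := by
        rw [ENNReal.ofReal_pow (by norm_num : (0:ℝ) ≤ 2)]
        norm_num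
      rw [h2, ← ENNReal.tsum_mul_left]
      apply tsum_congr
      intro n
      have h3 : (2:ℝ≥0∞)^j = (2:ℝ≥0∞)⁻¹^n * (2:ℝ≥0∞)^(n+j) := by
        rw [pow_add, ← mul_assoc, ← mul_pow,
            ENNReal.inv_mul_cancel (by norm_num) (by norm_num), one_pow, one_mul]
      rw [← mul_assoc, ← h3]
    calc ∑' j, ENNReal.ofReal ((2:ℝ)^j * ψ j)
        = ∑' (j : ℕ) (n : ℕ), (2:ℝ≥0∞)⁻¹^n * ((2:ℝ≥0∞)^(n+j) * ENNReal.ofReal (Δ (n + j))) :=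
          tsum_congr hterm
    _ = ∑' (n : ℕ) (j : ℕ), (2:ℝ≥0∞)⁻¹^n * ((2:ℝ≥0∞)^(n+j) * ENNReal.ofReal (Δ (n + j))) :=
          ENNReal.tsum_comm
    _ ≤ ∑' (n : ℕ), (2:ℝ≥0∞)⁻¹^n * Sum2 := by
          apply ENNReal.tsum_le_tsum
          intro n
          rw [ENNReal.tsum_mul_left]
          apply mul_le_mul_right
          exact ENNReal.tsum_comp_le_tsum_of_injective (add_right_injective n)
            (fun m => (2:ℝ≥0∞)^m * ENNReal.ofReal (Δ m))
    _ = (∑' (n : ℕ), (2:ℝ≥0∞)⁻¹^n) * Sum2 := ENNReal.tsum_mul_right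
    _ = 2 * Sum2 := by
          rw [ENNReal.tsum_geometric, ENNReal.one_sub_inv_two, inv_inv]
  have hfin : ∑' j, ENNReal.ofReal ((2:ℝ)^j * ψ j) ≠ ⊤ := by
    apply ne_top_of_le_ne_top _ hmain
    exact ENNReal.mul_ne_top (by norm_num) hSum2top
  have hsummable : Summable (fun l => (2:ℝ) ^ l * ψ l) := by
    have h1 := ENNReal.summable_toReal hfin
    apply h1.congr
    intro j
    have := (hψpos j).le
    exact ENNReal.toReal_ofReal (by positivity)
  exact ⟨c, hc, hc1, ψ, hψpos, hψω, hsummable⟩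

/-- If `∫_0^1 ω(r)^{-1/d} dr < ∞`, then there exist a set `A ⊆ ℝ^d` and a function
`f : A → ℝ` with modulus of continuity `ω` whose image has positive Lebesgue measure. -/
theorem exists_positive_image_of_integral_finite (d : ℕ) (hd : 2 ≤ d) (ω : ℝ → ℝ)
    (hω_nonneg : ∀ r : ℝ, 0 ≤ r → 0 ≤ ω r)
    (hω_cont : ContinuousOn ω (Ici (0 : ℝ)))
    (hω_mono : StrictMonoOn ω (Ici (0 : ℝ)))
    (hω_conv : ConvexOn ℝ (Ici (0 : ℝ)) ω)
    (hω_zero : ω 0 = 0)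
    (hω_dec : AntitoneOn (fun r : ℝ => ω r / r ^ d) (Ioi (0 : ℝ)))
    (hint : ∫⁻ t in Ioc (0 : ℝ) 1, ENNReal.ofReal (ω t ^ (-(1 / (d : ℝ)))) < ⊤) :
    ∃ (A : Set (EuclideanSpace ℝ (Fin d))) (f : EuclideanSpace ℝ (Fin d) → ℝ),
      (∀ x ∈ A, ∀ y ∈ A, |f x - f y| ≤ ω ‖x - y‖) ∧ 0 < volume (f '' A) := by
  have hd1 : 1 ≤ d := le_trans one_le_two hd
  obtain ⟨c, hc, hc1, ψ, hψpos, hψω, hψsum⟩ := lemmaB d hd1 ω hω_cont hω_mono hω_zero hint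
  obtain ⟨P, hP⟩ := lemmaA d hd1 ψ hψpos hψsum
  set S : Set ℝ := Ico (0:ℝ) 1 with hS
  set A : Set (EuclideanSpace ℝ (Fin d)) := P '' S with hA
  set f : EuclideanSpace ℝ (Fin d) → ℝ := fun y => c * Function.invFunOn P S y with hf
  -- injectivity of P on S
  have hinj : ∀ u ∈ S, ∀ v ∈ S, P u = P v → u = v := by
    intro u hu v hv hPuv
    by_contra hne
    obtain ⟨k, hk1, -⟩ := hP u hu v hv hne
    rw [hPuv, sub_self, norm_zero] at hk1
    exact absurd hk1 (not_le.mpr (hψpos k))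
  refine ⟨A, f, ?_, ?_⟩
  · intro x hx y hy
    have hex : ∃ a ∈ S, P a = x := by
      obtain ⟨u, hu, hu'⟩ := hx; exact ⟨u, hu, hu'⟩
    have hey : ∃ a ∈ S, P a = y := by
      obtain ⟨v, hv, hv'⟩ := hy; exact ⟨v, hv, hv'⟩
    set u := Function.invFunOn P S x with hu_def
    set v := Function.invFunOn P S y with hv_def
    have hu : u ∈ S := Function.invFunOn_mem hex
    have hv : v ∈ S := Function.invFunOn_mem hey
    have hPu : P u = x := Function.invFunOn_eq hex
    have hPv : P v = y := Function.invFunOn_eq hey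
    have hfx : f x = c * u := rfl
    have hfy : f y = c * v := rfl
    rw [hfx, hfy]
    by_cases huv : u = v
    · rw [huv, sub_self, abs_zero]
      exact hω_nonneg _ (norm_nonneg _)
    · obtain ⟨k, hk1, hk2⟩ := hP u hu v hv huv
      have hxy : ψ k ≤ ‖x - y‖ := by rwa [hPu, hPv] at hk1
      have h1 : |c * u - c * v| = c * |u - v| := by
        rw [← mul_sub, abs_mul, abs_of_pos hc]
      have h2 : c * |u - v| ≤ c * (((2^d : ℕ) : ℝ))⁻¹ ^ k :=
        mul_le_mul_of_nonneg_left hk2 hc.le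
      have h3 : c * (((2^d : ℕ) : ℝ))⁻¹ ^ k = ω (ψ k) := (hψω k).symm
      have h4 : ω (ψ k) ≤ ω ‖x - y‖ :=
        hω_mono.monotoneOn (mem_Ici.mpr (hψpos k).le)
          (mem_Ici.mpr (norm_nonneg _)) hxy
      rw [h1]
      linarith
  · have himage : Ico (0:ℝ) c ⊆ f '' A := by
      intro t ht
      have hv : t / c ∈ S := by
        rw [hS]
        constructor
        · exact div_nonneg ht.1 hc.le
        · rw [div_lt_one hc]; exact ht.2
      refine ⟨P (t / c), ⟨t / c, hv, rfl⟩, ?_⟩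
      have hex : ∃ a ∈ S, P a = P (t / c) := ⟨t / c, hv, rfl⟩
      have h1 : Function.invFunOn P S (P (t / c)) = t / c :=
        hinj _ (Function.invFunOn_mem hex) _ hv (Function.invFunOn_eq hex)
      rw [hf]
      simp only [h1]
      field_simp
    calc (0:ℝ≥0∞) < ENNReal.ofReal c := ENNReal.ofReal_pos.mpr hc
    _ = volume (Ico (0:ℝ) c) := by rw [Real.volume_Ico, sub_zero]
    _ ≤ volume (f '' A) := measure_mono himage
end

section
/- Let d ≥ 2 and let C > 0. For every set A ⊆ ℝ^d and every function f : A → ℝ satisfying |f(x) − f(y)| ≤ C‖x − y‖^d for all x, y ∈ A, the set f(A) ⊆ ℝ has Lebesgue measure zero. -/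
/-!
By the Lebesgue density theorem for `μH[d]`, which is a Haar measure on `ℝ^d`, almost every
point `x` of `A` is a density point. Near such a point, for any `N`, every ball of radius
`‖x - y‖ / N` centred on the segment `[x, y]` meets `A`, so `x` and `y` are joined by a chain of
`N` steps of length at most `3‖x - y‖ / N` through `A`. Summing the modulus along the chain gives
`|f x - f y| ≤ N C (3‖x - y‖ / N)^d ≤ (3^d C / N) ‖x - y‖^d`, because `d ≥ 2`. So near density
points `f` satisfies the modulus with an arbitrarily small constant `η`, and a map satisfying it
with constant `η` sends a set of `d`-dimensional Hausdorff measure `M` to a set of Lebesgue measure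
at most `η M`. The non-density points form a `μH[d]`-null set, whose image is null for the same
reason.
-/

open MeasureTheory Set Metric Filter Function
open scoped ENNReal NNReal Topology

theorem tsum_measure_inter_of_iUnion_eq_univ {X : Type*} [MeasurableSpace X] {μ : Measure X}
    {P : ℕ → Set X} (hPm : ∀ j, MeasurableSet (P j)) (hPd : Pairwise (Disjoint on P))
    (hPU : ⋃ j, P j = univ) (s : Set X) : ∑' j, μ (s ∩ P j) = μ s := by
  simp_rw [← Measure.restrict_apply' (hPm _)]
  rw [← Measure.sum_apply_of_countable, ← Measure.restrict_iUnion hPd hPm, hPU,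
    Measure.restrict_univ]

section HausdorffImage

variable {X : Type*} [MetricSpace X] [MeasurableSpace X] [BorelSpace X]

theorem exists_measurableSet_partition_dist_lt [TopologicalSpace.SeparableSpace X] [Nonempty X]
    {δ : ℝ} (hδ : 0 < δ) :
    ∃ P : ℕ → Set X, (∀ j, MeasurableSet (P j)) ∧ Pairwise (Disjoint on P) ∧
      ⋃ j, P j = univ ∧ ∀ j, ∀ x ∈ P j, ∀ y ∈ P j, dist x y < δ := by
  set u := TopologicalSpace.denseSeq X
  refine ⟨disjointed fun j => closedBall (u j) (δ / 3),
    .disjointed fun _ => measurableSet_closedBall, disjoint_disjointed _, ?_, ?_⟩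
  · rw [iUnion_disjointed, eq_univ_iff_forall]
    intro x
    obtain ⟨j, hj⟩ :=
      (TopologicalSpace.denseRange_denseSeq X).exists_dist_lt x (by positivity : 0 < δ / 3)
    exact mem_iUnion.2 ⟨j, hj.le⟩
  · intro j x hx y hy
    have hx' : dist x (u j) ≤ δ / 3 := disjointed_subset _ j hx
    have hy' : dist y (u j) ≤ δ / 3 := disjointed_subset _ j hy
    linarith [dist_triangle_right x y (u j)]

variable {f : X → ℝ} {s : Set X} {c : ℝ≥0} {p : ℕ}

theorem volume_image_le_of_dist_le_mul_pow (hp : 0 < p)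
    (h : ∀ x ∈ s, ∀ y ∈ s, dist (f x) (f y) ≤ c * dist x y ^ p) :
    volume (f '' s) ≤ c * μH[p] s := by
  have hf : HolderOnWith c p f s := by
    intro x hx y hy
    rw [edist_dist, edist_dist, ← ENNReal.ofReal_coe_nnreal, NNReal.coe_natCast,
      ENNReal.rpow_natCast, ← ENNReal.ofReal_pow dist_nonneg, ← ENNReal.ofReal_mul c.coe_nonneg]
    exact ENNReal.ofReal_le_ofReal (h x hx y hy)
  simpa [hausdorffMeasure_real] using
    hf.hausdorffMeasure_image_le (by exact_mod_cast hp) zero_le_one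

theorem volume_image_le_of_dist_le_mul_pow_of_dist_lt [TopologicalSpace.SeparableSpace X]
    (hp : 0 < p) {δ : ℝ} (hδ : 0 < δ)
    (h : ∀ x ∈ s, ∀ y ∈ s, dist x y < δ → dist (f x) (f y) ≤ c * dist x y ^ p) :
    volume (f '' s) ≤ c * μH[p] s := by
  rcases s.eq_empty_or_nonempty with rfl | ⟨x₀, -⟩
  · simp
  have : Nonempty X := ⟨x₀⟩
  obtain ⟨P, hPm, hPd, hPU, hPδ⟩ := exists_measurableSet_partition_dist_lt (X := X) hδ
  calc volume (f '' s) = volume (⋃ j, f '' (s ∩ P j)) := by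
        rw [← image_iUnion, ← inter_iUnion, hPU, inter_univ]
    _ ≤ ∑' j, volume (f '' (s ∩ P j)) := measure_iUnion_le _
    _ ≤ ∑' j, c * μH[p] (s ∩ P j) := ENNReal.tsum_le_tsum fun j =>
        volume_image_le_of_dist_le_mul_pow hp fun x hx y hy =>
          h x hx.1 y hy.1 (hPδ j x hx.2 y hy.2)
    _ = c * μH[p] s := by
        rw [ENNReal.tsum_mul_left, tsum_measure_inter_of_iUnion_eq_univ hPm hPd hPU]

theorem volume_image_le_of_eventually_dist_le_mul_pow [TopologicalSpace.SeparableSpace X]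
    (hp : 0 < p) (h : ∀ x ∈ s, ∀ᶠ y in 𝓝[s] x, dist (f x) (f y) ≤ c * dist x y ^ p) :
    volume (f '' s) ≤ c * μH[p] s := by
  set S : ℕ → Set X := fun k =>
    {x ∈ s | ∀ y ∈ s, dist x y < 1 / (k + 1) → dist (f x) (f y) ≤ c * dist x y ^ p}
  have hS : Monotone S := fun k l hkl x hx =>
    ⟨hx.1, fun y hy hxy => hx.2 y hy (hxy.trans_le (Nat.one_div_le_one_div hkl))⟩
  have hsS : s = ⋃ k, S k := by
    refine Subset.antisymm (fun x hx => ?_) (iUnion_subset fun k => sep_subset _ _)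
    obtain ⟨δ, hδ, hxδ⟩ := Metric.mem_nhdsWithin_iff.1 (h x hx)
    obtain ⟨k, hk⟩ := exists_nat_one_div_lt hδ
    refine mem_iUnion.2 ⟨k, hx, fun y hy hxy => hxδ ⟨?_, hy⟩⟩
    rw [mem_ball, dist_comm]
    exact hxy.trans hk
  calc volume (f '' s) = ⨆ k, volume (f '' S k) := by
        rw [hsS, image_iUnion, Monotone.measure_iUnion fun k l hkl => image_mono (hS hkl)]
    _ ≤ c * μH[p] s := iSup_le fun k =>
        (volume_image_le_of_dist_le_mul_pow_of_dist_lt hp Nat.one_div_pos_of_nat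
          fun x hx y hy => hx.2 y hy.1).trans (by gcongr; exact sep_subset _ _)

theorem volume_image_eq_zero_of_eventually_dist_le_mul_pow [TopologicalSpace.SeparableSpace X]
    (hp : 0 < p) (hs : μH[p] s ≠ ∞)
    (h : ∀ η : ℝ≥0, 0 < η → ∀ x ∈ s, ∀ᶠ y in 𝓝[s] x, dist (f x) (f y) ≤ η * dist x y ^ p) :
    volume (f '' s) = 0 := by
  by_contra hne
  obtain ⟨η, hη, hlt⟩ := ENNReal.exists_nnreal_pos_mul_lt hs hne
  exact (volume_image_le_of_eventually_dist_le_mul_pow hp (h η hη)).not_gt hlt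

end HausdorffImage

theorem dist_le_of_chain {X Y : Type*} [PseudoMetricSpace X] [PseudoMetricSpace Y] {A : Set X}
    {f : X → Y} {C : ℝ≥0} {p N : ℕ}
    (hf : ∀ x ∈ A, ∀ y ∈ A, dist (f x) (f y) ≤ C * dist x y ^ p) {a : ℕ → X} {r : ℝ}
    (ha : ∀ i ≤ N, a i ∈ A) (hstep : ∀ i < N, dist (a i) (a (i + 1)) ≤ r) :
    dist (f (a 0)) (f (a N)) ≤ N * (C * r ^ p) := by
  calc dist (f (a 0)) (f (a N)) ≤ ∑ i ∈ Finset.range N, dist (f (a i)) (f (a (i + 1))) :=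
        dist_le_range_sum_dist (f ∘ a) N
    _ ≤ ∑ _i ∈ Finset.range N, C * r ^ p := Finset.sum_le_sum fun i hi => by
        have hi : i < N := Finset.mem_range.1 hi
        exact (hf _ (ha i hi.le) _ (ha (i + 1) hi)).trans
          (mul_le_mul_of_nonneg_left (pow_le_pow_left₀ dist_nonneg (hstep i hi) p) C.coe_nonneg)
    _ = N * (C * r ^ p) := by simp

theorem exists_chain_of_inter_closedBall_nonempty {E : Type*} [NormedAddCommGroup E]
    [NormedSpace ℝ E] {A : Set E} {x y : E} {N : ℕ} (hN : 0 < N) (hx : x ∈ A) (hy : y ∈ A)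
    (hnet : ∀ z, dist z x ≤ dist x y → (A ∩ closedBall z (dist x y / N)).Nonempty) :
    ∃ a : ℕ → E, a 0 = x ∧ a N = y ∧ (∀ i ≤ N, a i ∈ A) ∧
      ∀ i < N, dist (a i) (a (i + 1)) ≤ 3 * dist x y / N := by
  set r := dist x y
  set z : ℕ → E := fun i => AffineMap.lineMap x y ((i : ℝ) / N)
  have hNpos : (0 : ℝ) < N := by exact_mod_cast hN
  have hz : ∀ i ≤ N, dist (z i) x ≤ r := fun i hi => by
    rw [dist_lineMap_left, Real.norm_of_nonneg (by positivity)]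
    exact mul_le_of_le_one_left dist_nonneg ((div_le_one hNpos).2 (by exact_mod_cast hi))
  choose! b hbA hb using hnet
  set a : ℕ → E := fun i => if i = 0 then x else if i = N then y else b (z i)
  have ha : ∀ i ≤ N, a i ∈ A ∧ dist (a i) (z i) ≤ r / N := by
    intro i hi
    by_cases h0 : i = 0
    · subst h0
      simp only [a, z, if_pos, CharP.cast_eq_zero, zero_div, AffineMap.lineMap_apply_zero,
        dist_self]
      exact ⟨hx, by positivity⟩
    by_cases hN' : i = N
    · subst hN'
      simp only [a, z, h0, if_false, if_pos, div_self hNpos.ne', AffineMap.lineMap_apply_one,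
        dist_self]
      exact ⟨hy, by positivity⟩
    · simp only [a, h0, hN', if_false]
      exact ⟨hbA _ (hz i hi), hb _ (hz i hi)⟩
  refine ⟨a, by simp [a], by simp [a, hN.ne'], fun i hi => (ha i hi).1, fun i hi => ?_⟩
  calc dist (a i) (a (i + 1))
      ≤ dist (a i) (z i) + dist (z i) (z (i + 1)) + dist (z (i + 1)) (a (i + 1)) :=
        dist_triangle4 _ _ _ _
    _ ≤ r / N + r / N + r / N := by
        gcongr
        · exact (ha i hi.le).2
        · rw [dist_lineMap_lineMap, Real.dist_eq, Nat.cast_succ, ← sub_div, sub_add_cancel_left,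
            abs_div, abs_neg, abs_one, Nat.abs_cast, one_div_mul_eq_div]
        · rw [dist_comm]
          exact (ha (i + 1) hi).2
    _ = 3 * r / N := by ring

theorem measure_diff_setOf_tendsto_density_eq_zero {X : Type*} [MetricSpace X]
    [MeasurableSpace X] [BorelSpace X] [SecondCountableTopology X] [HasBesicovitchCovering X]
    (μ : Measure X) [IsLocallyFiniteMeasure μ] (A : Set X) :
    μ (A \ {x | Tendsto (fun r => μ (A ∩ closedBall x r) / μ (closedBall x r)) (𝓝[>] 0) (𝓝 1)})
      = 0 := by
  have hae := ae_iff.1 (Besicovitch.ae_tendsto_measure_inter_div μ A)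
  refine measure_mono_null ?_ (nonpos_iff_eq_zero.1 ((Measure.le_restrict_apply _ _).trans hae.le))
  exact fun x hx => ⟨hx.2, hx.1⟩

theorem inter_nonempty_of_measure_lt_add {α : Type*} [MeasurableSpace α] {μ : Measure α}
    {A B t : Set α} (ht : MeasurableSet t) (htB : t ⊆ B) (h : μ B < μ (A ∩ B) + μ t) :
    (A ∩ t).Nonempty := by
  by_contra hAt
  refine h.not_ge ?_
  calc μ (A ∩ B) + μ t ≤ μ (B \ t) + μ (B ∩ t) := by
        gcongr
        · exact fun w hw => ⟨hw.2, fun hwt => hAt ⟨w, hw.1, hwt⟩⟩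
        · rw [inter_eq_right.2 htB]
    _ = μ B := measure_sdiff_add_inter B ht

theorem eventually_measure_closedBall_lt_add {X : Type*} [MetricSpace X] [ProperSpace X]
    [MeasurableSpace X] {μ : Measure X} [IsFiniteMeasureOnCompacts μ] {A : Set X} {x : X}
    {κ : ℝ≥0∞} (hκ0 : κ ≠ 0) (hκ : κ ≠ ∞)
    (hdens : Tendsto (fun r => μ (A ∩ closedBall x r) / μ (closedBall x r)) (𝓝[>] 0) (𝓝 1)) :
    ∀ᶠ r in 𝓝[>] 0, μ (closedBall x r) < μ (A ∩ closedBall x r) + κ * μ (closedBall x r) := by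
  filter_upwards [hdens.eventually
    (lt_mem_nhds (ENNReal.sub_lt_self ENNReal.one_ne_top one_ne_zero hκ0))] with r hr
  have hB : μ (closedBall x r) ≠ ∞ := measure_closedBall_lt_top.ne
  calc μ (closedBall x r) ≤ (1 - κ + κ) * μ (closedBall x r) :=
        le_mul_of_one_le_left' le_tsub_add
    _ = (1 - κ) * μ (closedBall x r) + κ * μ (closedBall x r) := add_mul _ _ _
    _ < μ (A ∩ closedBall x r) + κ * μ (closedBall x r) :=
        ENNReal.add_lt_add_right (ENNReal.mul_ne_top hκ hB)
          ((ENNReal.lt_div_iff_mul_lt (Or.inr (ENNReal.sub_ne_top ENNReal.one_ne_top))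
            (Or.inl hB)).1 hr)

theorem mul_div_pow_le_pow_div {n t : ℝ} {p : ℕ} (hp : 2 ≤ p) (hn : 1 ≤ n) (ht : 0 ≤ t) :
    n * (t / n) ^ p ≤ t ^ p / n := by
  have hn0 : 0 < n := zero_lt_one.trans_le hn
  rw [div_pow, mul_div_assoc', div_le_div_iff₀ (by positivity) hn0]
  calc n * t ^ p * n = t ^ p * n ^ 2 := by ring
    _ ≤ t ^ p * n ^ p := by gcongr

section AddHaar

variable {E : Type*} [NormedAddCommGroup E] [NormedSpace ℝ E] [FiniteDimensional ℝ E]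
  [MeasurableSpace E] [BorelSpace E] {μ : Measure E} [μ.IsAddHaarMeasure]

theorem inter_closedBall_nonempty_of_measure_closedBall_lt {A : Set E} {x : E} {r : ℝ} {N : ℕ}
    (hN : 0 < N) (hr : 0 ≤ r)
    (h : μ (closedBall x (2 * r)) < μ (A ∩ closedBall x (2 * r)) +
      ENNReal.ofReal ((1 / (2 * N)) ^ Module.finrank ℝ E) * μ (closedBall x (2 * r)))
    {z : E} (hz : dist z x ≤ r) : (A ∩ closedBall z (r / N)).Nonempty := by
  have hN1 : (1 : ℝ) ≤ N := by exact_mod_cast hN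
  refine inter_nonempty_of_measure_lt_add measurableSet_closedBall (fun w hw => ?_)
    (h.trans_eq ?_)
  · have hw : dist w z ≤ r / N := hw
    have : r / N ≤ r := div_le_self hr hN1
    exact mem_closedBall.2 (by linarith [dist_triangle w z x])
  · rw [Measure.addHaar_closedBall_center μ x, Measure.addHaar_closedBall_center μ z,
      ← Measure.addHaar_closedBall_mul μ 0 (by positivity) (by positivity)]
    congr 3
    field_simp

theorem eventually_dist_le_mul_pow_of_tendsto_density {A : Set E} {f : E → ℝ} {C : ℝ≥0}
    {p : ℕ} (hp : 2 ≤ p) (hf : ∀ x ∈ A, ∀ y ∈ A, dist (f x) (f y) ≤ C * dist x y ^ p) {x : E}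
    (hx : x ∈ A)
    (hdens : Tendsto (fun r => μ (A ∩ closedBall x r) / μ (closedBall x r)) (𝓝[>] 0) (𝓝 1))
    {η : ℝ≥0} (hη : 0 < η) :
    ∀ᶠ y in 𝓝[A] x, dist (f x) (f y) ≤ η * dist x y ^ p := by
  obtain ⟨N, hN⟩ := exists_nat_gt (3 ^ p * C / η : ℝ)
  have hN0 : 0 < N := by exact_mod_cast (div_nonneg (by positivity) η.coe_nonneg).trans_lt hN
  have hN1 : (1 : ℝ) ≤ N := by exact_mod_cast hN0
  obtain ⟨δ, hδ, hball⟩ := Metric.eventually_nhds_iff.1 <| eventually_nhdsWithin_iff.1 <|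
    eventually_measure_closedBall_lt_add (μ := μ)
      (ENNReal.ofReal_pos.2 (by positivity : 0 < (1 / (2 * (N : ℝ))) ^ Module.finrank ℝ E)).ne'
      ENNReal.ofReal_ne_top hdens
  filter_upwards [self_mem_nhdsWithin, mem_nhdsWithin_of_mem_nhds (ball_mem_nhds x (half_pos hδ))]
    with y hy hxy
  rcases eq_or_ne x y with rfl | hne
  · rw [dist_self, dist_self]
    positivity
  set r := dist x y
  have hr : 0 < r := dist_pos.2 hne
  have hr2 : dist (2 * r) 0 < δ := by
    rw [Real.dist_eq, sub_zero, abs_of_pos (by positivity)]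
    linarith [mem_ball'.1 hxy]
  obtain ⟨a, rfl, rfl, haA, hstep⟩ := exists_chain_of_inter_closedBall_nonempty hN0 hx hy
    fun z hz => inter_closedBall_nonempty_of_measure_closedBall_lt hN0 hr.le
      (hball hr2 (by positivity : (0 : ℝ) < 2 * r)) hz
  calc dist (f (a 0)) (f (a N)) ≤ N * (C * (3 * r / N) ^ p) := dist_le_of_chain hf haA hstep
    _ = C * (N * (3 * r / N) ^ p) := by ring
    _ ≤ C * ((3 * r) ^ p / N) := by gcongr; exact mul_div_pow_le_pow_div hp hN1 (by positivity)
    _ = 3 ^ p * C / N * r ^ p := by ring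
    _ ≤ η * r ^ p := by
        gcongr
        rw [div_lt_iff₀ (by positivity)] at hN
        rw [div_le_iff₀ (by positivity)]
        linarith

end AddHaar

/-- If `f : A → ℝ`, `A ⊆ ℝ^d`, satisfies `|f x − f y| ≤ C‖x − y‖^d`, then `f(A)`
has Lebesgue measure zero. -/
theorem sard_of_pow_modulus (d : ℕ) (hd : 2 ≤ d) (C : ℝ) (hC : 0 < C)
    (A : Set (EuclideanSpace ℝ (Fin d))) (f : EuclideanSpace ℝ (Fin d) → ℝ)
    (hf : ∀ x ∈ A, ∀ y ∈ A, |f x - f y| ≤ C * ‖x - y‖ ^ d) :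
    volume (f '' A) = 0 := by
  have hd0 : 0 < d := zero_lt_two.trans_le hd
  have hf' : ∀ x ∈ A, ∀ y ∈ A, dist (f x) (f y) ≤ C.toNNReal * dist x y ^ d := by
    simpa [Real.coe_toNNReal _ hC.le, Real.dist_eq, dist_eq_norm] using hf
  set T := {x | Tendsto (fun r => μH[d] (A ∩ closedBall x r) / μH[d] (closedBall x r))
    (𝓝[>] 0) (𝓝 1)}
  have hAT : μH[d] (A \ T) = 0 := measure_diff_setOf_tendsto_density_eq_zero _ A
  have hdense (R : ℕ) : volume (f '' (A ∩ T ∩ closedBall 0 R)) = 0 :=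
    volume_image_eq_zero_of_eventually_dist_le_mul_pow hd0
      ((measure_mono inter_subset_right).trans_lt measure_closedBall_lt_top).ne fun η hη x hx =>
        (eventually_dist_le_mul_pow_of_tendsto_density hd hf' hx.1.1 hx.1.2 hη).filter_mono
          (nhdsWithin_mono x (inter_subset_left.trans inter_subset_left))
  have hcover : A ⊆ (A \ T) ∪ ⋃ R : ℕ, A ∩ T ∩ closedBall 0 R := fun x hx => by
    by_cases hxT : x ∈ T
    · obtain ⟨R, hR⟩ := exists_nat_ge ‖x‖
      exact mem_union_right _ (mem_iUnion.2 ⟨R, ⟨hx, hxT⟩, mem_closedBall_zero_iff.2 hR⟩)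
    · exact mem_union_left _ ⟨hx, hxT⟩
  refine measure_mono_null (image_mono hcover) ?_
  rw [image_union, image_iUnion]
  refine measure_union_null (nonpos_iff_eq_zero.1 ?_) (measure_iUnion_null hdense)
  simpa [hAT] using
    volume_image_le_of_dist_le_mul_pow (s := A \ T) hd0 fun x hx y hy => hf' x hx.1 y hy.1
end

section
/- Let d ≥ 1 and let ω : [0,∞) → [0,∞) be continuous, strictly increasing, convex, with ω(0) = 0, such that r ↦ ω(r)/r^d is monotone decreasing on (0,∞). Then there is a constant c depending only on d (one may take c = d·2^d) such that ω(r + αR) − ω(r) ≤ c·α·ω(R) for every 0 < r ≤ R and every α ∈ [0,1]. -/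
open Set

/-! Convexity, compared along the chord from `r` to `2R`, bounds the increment `ω(r + αR) − ω(r)`
by `α·ω(2R)`, since the chord is at least `R` long and `ω(r) ≥ 0`; the decay of `ω(r)/r^d` gives
the doubling bound `ω(2R) ≤ 2^d·ω(R)`. -/

theorem ConvexOn.mul_sub_le_mul_sub {𝕜 : Type*} [Field 𝕜] [LinearOrder 𝕜] [IsStrictOrderedRing 𝕜]
    {s : Set 𝕜} {f : 𝕜 → 𝕜} (hf : ConvexOn 𝕜 s f) {r b h : 𝕜} (hr : r ∈ s) (hb : b ∈ s)
    (hh : 0 ≤ h) (hrb : r + h ≤ b) :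
    (b - r) * (f (r + h) - f r) ≤ h * (f b - f r) := by
  rcases (show r ≤ b by linarith).eq_or_lt with rfl | hlt
  · obtain rfl : h = 0 := by linarith
    simp
  have hpos : 0 < b - r := sub_pos.mpr hlt
  set t := h / (b - r) with ht
  have ht_mul : t * (b - r) = h := div_mul_cancel₀ h hpos.ne'
  have ht1 : t ≤ 1 := (div_le_one hpos).mpr (by linarith)
  have hconv := hf.2 hr hb (sub_nonneg.mpr ht1) (div_nonneg hh hpos.le) (sub_add_cancel 1 t)
  simp only [smul_eq_mul, ← ht] at hconv
  have hpoint : (1 - t) * r + t * b = r + h := by linear_combination ht_mul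
  rw [hpoint] at hconv
  linear_combination mul_le_mul_of_nonneg_left hconv hpos.le + (f b - f r) * ht_mul

theorem AntitoneOn.le_pow_mul_of_div_pow {f : ℝ → ℝ} {d : ℕ}
    (hf : AntitoneOn (fun x : ℝ => f x / x ^ d) (Ioi 0)) {x c : ℝ} (hx : 0 < x) (hc : 1 ≤ c) :
    f (c * x) ≤ c ^ d * f x := by
  have hcx : 0 < c * x := by positivity
  have hle : x ≤ c * x := le_mul_of_one_le_left hx.le hc
  have h := hf hx hcx hle
  simp only [mul_pow] at h
  rw [div_le_div_iff₀ (by positivity) (by positivity)] at h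
  exact le_of_mul_le_mul_right (h.trans_eq (by ring)) (pow_pos hx d)

theorem omega_lipschitz_general (d : ℕ) (hd : 1 ≤ d) (ω : ℝ → ℝ)
    (hω_nonneg : ∀ r : ℝ, 0 ≤ r → 0 ≤ ω r)
    (hω_conv : ConvexOn ℝ (Ici (0 : ℝ)) ω)
    (hω_dec : AntitoneOn (fun r : ℝ => ω r / r ^ d) (Ioi (0 : ℝ))) :
    ∀ r R α : ℝ, 0 < r → r ≤ R → 0 ≤ α → α ≤ 1 →
      ω (r + α * R) - ω r ≤ (d * 2 ^ d : ℝ) * α * ω R := by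
  intro r R α hr hrR hα hα1
  have hR : 0 < R := hr.trans_le hrR
  have hchord := hω_conv.mul_sub_le_mul_sub (b := 2 * R) (mem_Ici.mpr hr.le)
    (mem_Ici.mpr (by linarith)) (mul_nonneg hα hR.le) (by nlinarith)
  have hωr := hω_nonneg r hr.le
  have hω2R := hω_nonneg (2 * R) (by linarith)
  have hincr : ω (r + α * R) - ω r ≤ α * ω (2 * R) := by
    by_contra! hgt
    have hΔ : 0 ≤ ω (r + α * R) - ω r := (mul_nonneg hα hω2R).trans hgt.le
    nlinarith [mul_nonneg (sub_nonneg.mpr hrR) hΔ, mul_pos hR (sub_pos.mpr hgt),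
      mul_nonneg (mul_nonneg hα hR.le) hωr]
  have hdouble : ω (2 * R) ≤ 2 ^ d * ω R := hω_dec.le_pow_mul_of_div_pow hR one_le_two
  have hd' : (1 : ℝ) ≤ d := by exact_mod_cast hd
  calc ω (r + α * R) - ω r ≤ α * (2 ^ d * ω R) := hincr.trans (by gcongr)
    _ = 1 * 2 ^ d * α * ω R := by ring
    _ ≤ d * 2 ^ d * α * ω R := by gcongr; exact hω_nonneg R hR.le

/-- 'Lipschitz' property of the modulus of continuity:
`ω(r + αR) − ω(r) ≤ d·2^d·α·ω(R)` for `0 < r ≤ R` and `α ∈ [0,1]`. -/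
theorem omega_lipschitz (d : ℕ) (hd : 1 ≤ d) (ω : ℝ → ℝ)
    (hω_nonneg : ∀ r : ℝ, 0 ≤ r → 0 ≤ ω r)
    (hω_cont : ContinuousOn ω (Ici (0 : ℝ)))
    (hω_mono : StrictMonoOn ω (Ici (0 : ℝ)))
    (hω_conv : ConvexOn ℝ (Ici (0 : ℝ)) ω)
    (hω_zero : ω 0 = 0)
    (hω_dec : AntitoneOn (fun r : ℝ => ω r / r ^ d) (Ioi (0 : ℝ))) :
    ∀ r R α : ℝ, 0 < r → r ≤ R → 0 ≤ α → α ≤ 1 →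
      ω (r + α * R) - ω r ≤ (d * 2 ^ d : ℝ) * α * ω R :=
  omega_lipschitz_general d hd ω hω_nonneg hω_conv hω_dec
end

section
/- Let d ≥ 1. There is a constant c > 0 depending only on d such that P(S) ≥ c|S|^{(d−1)/d} for every bounded nonempty set S ⊆ ℝ^d. -/
open MeasureTheory Set Metric

/-- `P₀(S)` : the essential infimum over `t > 0` of the `(d−1)`-dimensional Hausdorff
measure of the topological boundary of the open `t`-neighborhood of `S`. -/
noncomputable def P0 {d : ℕ} (S : Set (EuclideanSpace ℝ (Fin d))) : ENNReal :=
  essInf (fun t : ℝ => μH[(d : ℝ) - 1] (frontier (thickening t S)))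
    (volume.restrict (Ioi (0 : ℝ)))

/-- `P(S) = inf {P₀(T) : T bounded, S ⊆ T}`, a 'minimal perimeter' of `S`. -/
noncomputable def Pm {d : ℕ} (S : Set (EuclideanSpace ℝ (Fin d))) : ENNReal :=
  ⨅ (T : Set (EuclideanSpace ℝ (Fin d))) (_ : Bornology.IsBounded T) (_ : S ⊆ T), P0 T

/-!
Every line parallel to a coordinate axis through a point of the closure of a bounded set
`U ⊆ ℝᵈ` leaves `closure U`, hence meets `∂U`. So each coordinate projection of `closure U`
lies in the projection of `∂U`, whose Lebesgue measure is at most `H^{d-1}(∂U)` because the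
projection is 1-Lipschitz. The weak Loomis–Whitney inequality `|K|^{(d-1)/d} ≤ ∑ᵢ |πᵢ K|`,
proved by slicing along one coordinate and induction on the dimension, then gives
`|U|^{(d-1)/d} ≤ d · H^{d-1}(∂U)`. Applied to `U = B(T, t) ⊇ S` for every `t > 0` this
yields the theorem with `c = 1/d`.
-/

open scoped ENNReal

/-- The dichotomy closing the induction step of the Loomis–Whitney bound: `a` is the measure of
the projection along the slicing direction, `B` the sum of the other projections. -/
lemma ENNReal.rpow_div_add_one_le_add_of_le_rpow_inv_mul {V a B : ℝ≥0∞} {r : ℝ} (hr : 0 < r)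
    (hV : V ≠ ⊤) (h : V ≤ a ^ r⁻¹ * B) : V ^ (r / (r + 1)) ≤ B + a := by
  rcases le_or_gt (V ^ (r / (r + 1))) a with ha | ha
  · exact ha.trans le_add_self
  rcases eq_or_ne V 0 with rfl | hV0
  · simp [ENNReal.zero_rpow_of_pos (by positivity : 0 < r / (r + 1))]
  have hsmall : a ^ r⁻¹ ≤ V ^ (r + 1)⁻¹ := by
    calc a ^ r⁻¹ ≤ (V ^ (r / (r + 1))) ^ r⁻¹ := ENNReal.rpow_le_rpow ha.le (by positivity)
      _ = V ^ (r + 1)⁻¹ := by rw [← ENNReal.rpow_mul]; congr 1; field_simp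
  have hcancel : V ^ (r + 1)⁻¹ * V ^ (r / (r + 1)) ≤ V ^ (r + 1)⁻¹ * B := by
    rw [← ENNReal.rpow_add_of_nonneg _ _ (by positivity) (by positivity),
      show (r + 1)⁻¹ + r / (r + 1) = 1 by field_simp; ring, ENNReal.rpow_one]
    exact h.trans (mul_le_mul_left hsmall B)
  refine ((ENNReal.mul_le_mul_iff_right ?_ ?_).1 hcancel).trans le_self_add
  · simp [ENNReal.rpow_eq_zero_iff, hV0, hV]
  · exact ENNReal.rpow_ne_top_of_nonneg (by positivity) hV

lemma exists_add_smul_mem_frontier {E : Type*} [NormedAddCommGroup E] [NormedSpace ℝ E]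
    {U : Set E} (hU : Bornology.IsBounded U) {x : E} (hx : x ∈ U) {v : E} (hv : v ≠ 0) :
    ∃ t : ℝ, x + t • v ∈ frontier U := by
  let f : ℝ → E := fun t => x + t • v
  have hf : AntilipschitzWith ‖v‖₊⁻¹ f := AntilipschitzWith.of_le_mul_dist fun s t => by
    rw [dist_add_left, dist_eq_norm, dist_eq_norm, ← sub_smul, norm_smul, NNReal.coe_inv,
      coe_nnnorm, mul_comm ‖s - t‖, inv_mul_cancel_left₀ (norm_ne_zero_iff.2 hv)]
  obtain ⟨t, ht⟩ := nonempty_frontier_iff.2 ⟨⟨0, by simpa [f] using hx⟩,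
    fun h => NormedSpace.unbounded_univ ℝ ℝ (h ▸ hf.isBounded_preimage hU)⟩
  exact ⟨t, (by fun_prop : Continuous f).frontier_preimage_subset U ht⟩

lemma volume_image_le_hausdorffMeasure {X ι : Type*} [EMetricSpace X] [MeasurableSpace X]
    [BorelSpace X] [Fintype ι] {f : X → ι → ℝ} (hf : LipschitzWith 1 f) (s : Set X) :
    volume (f '' s) ≤ μH[Fintype.card ι] s := by
  simpa using hf.hausdorffMeasure_image_le (Nat.cast_nonneg (Fintype.card ι)) s

section CoordinateProjections

variable {n : ℕ}

def headSlice (A : Set (Fin (n + 1) → ℝ)) (t : ℝ) : Set (Fin n → ℝ) := {y | Fin.cons t y ∈ A}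

lemma preimage_piFinSuccAbove_zero_symm (A : Set (Fin (n + 1) → ℝ)) :
    (MeasurableEquiv.piFinSuccAbove (fun _ => ℝ) 0).symm ⁻¹' A = {p | Fin.cons p.1 p.2 ∈ A} := by
  ext p
  simp [MeasurableEquiv.piFinSuccAbove_symm_apply, Fin.insertNthEquiv]

lemma measurableSet_setOf_cons_mem {A : Set (Fin (n + 1) → ℝ)} (hA : MeasurableSet A) :
    MeasurableSet {p : ℝ × (Fin n → ℝ) | Fin.cons p.1 p.2 ∈ A} :=
  preimage_piFinSuccAbove_zero_symm A ▸ (MeasurableEquiv.piFinSuccAbove _ 0).symm.measurable hA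

lemma measurable_volume_headSlice {A : Set (Fin (n + 1) → ℝ)} (hA : MeasurableSet A) :
    Measurable fun t => volume (headSlice A t) :=
  measurable_measure_prodMk_left (measurableSet_setOf_cons_mem hA)

lemma volume_eq_lintegral_volume_headSlice {A : Set (Fin (n + 1) → ℝ)} (hA : MeasurableSet A) :
    volume A = ∫⁻ t, volume (headSlice A t) := by
  rw [← (volume_preserving_piFinSuccAbove (fun _ => ℝ) 0).symm.measure_preimage
    hA.nullMeasurableSet, preimage_piFinSuccAbove_zero_symm, Measure.volume_eq_prod,
    Measure.prod_apply (measurableSet_setOf_cons_mem hA)]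
  rfl

lemma volume_le_mul_sum_of_headSlice_le {ι : Type*} [Fintype ι] {k : ℕ}
    {A : Set (Fin (n + 1) → ℝ)} {B : ι → Set (Fin (k + 1) → ℝ)}
    (hA : MeasurableSet A) (hB : ∀ i, MeasurableSet (B i))
    {c : ℝ≥0∞} (h : ∀ t, volume (headSlice A t) ≤ c * ∑ i, volume (headSlice (B i) t)) :
    volume A ≤ c * ∑ i, volume (B i) := by
  calc volume A = ∫⁻ t, volume (headSlice A t) := volume_eq_lintegral_volume_headSlice hA
    _ ≤ ∫⁻ t, c * ∑ i, volume (headSlice (B i) t) := lintegral_mono h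
    _ = c * ∑ i, volume (B i) := by
      rw [lintegral_const_mul _ (Finset.measurable_sum _ fun i _ =>
          measurable_volume_headSlice (hB i)),
        lintegral_finsetSum _ fun i _ => measurable_volume_headSlice (hB i)]
      simp only [← volume_eq_lintegral_volume_headSlice (hB _)]

lemma headSlice_subset_image_removeNth_zero (A : Set (Fin (n + 1) → ℝ)) (t : ℝ) :
    headSlice A t ⊆ Fin.removeNth 0 '' A :=
  fun _ hy => ⟨_, hy, by simp⟩

lemma isCompact_headSlice {A : Set (Fin (n + 1) → ℝ)} (hA : IsCompact A) (t : ℝ) :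
    IsCompact (headSlice A t) :=
  (hA.image (continuous_pi fun _ => continuous_apply _)).of_isClosed_subset
    (hA.isClosed.preimage (continuous_const.finCons continuous_id))
    (headSlice_subset_image_removeNth_zero A t)

lemma image_removeNth_headSlice_subset (A : Set (Fin (n + 2) → ℝ)) (i : Fin (n + 1)) (t : ℝ) :
    i.removeNth '' headSlice A t ⊆ headSlice (i.succ.removeNth '' A) t := by
  rintro _ ⟨y, hy, rfl⟩
  exact ⟨_, hy, Fin.cons_comp_succ_succAbove t y i⟩

theorem rpow_volume_le_sum_volume_image_removeNth :
    ∀ {n : ℕ} {K : Set (Fin (n + 1) → ℝ)}, IsCompact K → K.Nonempty →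
      volume K ^ ((n : ℝ) / (n + 1)) ≤ ∑ i : Fin (n + 1), volume (i.removeNth '' K)
  | 0, K, _, ⟨x, hx⟩ => by
    have : Fin.removeNth 0 '' K = univ := eq_univ_of_forall fun _ => ⟨x, hx, Subsingleton.elim _ _⟩
    rw [Fin.sum_univ_one, this]
    simp [volume_pi]
  | n + 1, K, hK, _ => by
    have hslice (t : ℝ) : volume (headSlice K t) ≤
        volume (Fin.removeNth 0 '' K) ^ ((n + 1 : ℕ) : ℝ)⁻¹ *
          ∑ i : Fin (n + 1), volume (headSlice (i.succ.removeNth '' K) t) := by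
      rcases (headSlice K t).eq_empty_or_nonempty with hempty | hne
      · simp [hempty]
      calc volume (headSlice K t)
          = volume (headSlice K t) ^ ((n + 1 : ℕ) : ℝ)⁻¹ *
              volume (headSlice K t) ^ ((n : ℝ) / (n + 1)) := by
            rw [← ENNReal.rpow_add_of_nonneg _ _ (by positivity) (by positivity),
              show ((n + 1 : ℕ) : ℝ)⁻¹ + n / (n + 1) = 1 by push_cast; field_simp; ring,
              ENNReal.rpow_one]
        _ ≤ _ := by
          refine mul_le_mul' (ENNReal.rpow_le_rpow (measure_mono
            (headSlice_subset_image_removeNth_zero K t)) (by positivity)) ?_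
          exact (rpow_volume_le_sum_volume_image_removeNth (isCompact_headSlice hK t) hne).trans
            (Finset.sum_le_sum fun i _ => measure_mono (image_removeNth_headSlice_subset K i t))
    have hproj (i : Fin (n + 2)) : MeasurableSet (i.removeNth '' K) :=
      (hK.image (continuous_pi fun _ => continuous_apply _)).measurableSet
    have hvolume := volume_le_mul_sum_of_headSlice_le hK.measurableSet
      (fun i : Fin (n + 1) => hproj i.succ) hslice
    rw [Fin.sum_univ_succ]
    exact (ENNReal.rpow_div_add_one_le_add_of_le_rpow_inv_mul (by positivity)
      hK.measure_lt_top.ne hvolume).trans_eq (add_comm _ _)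

lemma lipschitzWith_removeNth_ofLp (i : Fin (n + 1)) :
    LipschitzWith 1 fun x : EuclideanSpace ℝ (Fin (n + 1)) => i.removeNth x.ofLp := by
  have hremove : LipschitzWith 1 (i.removeNth : (Fin (n + 1) → ℝ) → Fin n → ℝ) :=
    LipschitzWith.of_dist_le_mul fun x y => by
      rw [NNReal.coe_one, one_mul]
      exact (dist_pi_le_iff dist_nonneg).2 fun j => dist_le_pi_dist x y (i.succAbove j)
  have := hremove.comp (PiLp.lipschitzWith_ofLp 2 fun _ : Fin (n + 1) => ℝ)
  rwa [mul_one] at this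

lemma image_removeNth_closure_subset_image_frontier {U : Set (EuclideanSpace ℝ (Fin (n + 1)))}
    (hU : Bornology.IsBounded U) (i : Fin (n + 1)) :
    (fun x : EuclideanSpace ℝ (Fin (n + 1)) => i.removeNth x.ofLp) '' closure U ⊆
      (fun x : EuclideanSpace ℝ (Fin (n + 1)) => i.removeNth x.ofLp) '' frontier U := by
  rintro _ ⟨z, hz, rfl⟩
  obtain ⟨t, ht⟩ := exists_add_smul_mem_frontier hU.closure hz
    ((PiLp.single_eq_zero_iff 2 i).not.2 one_ne_zero : PiLp.single 2 i (1 : ℝ) ≠ 0)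
  refine ⟨_, frontier_closure_subset ht, funext fun j => ?_⟩
  simp [Fin.removeNth, Fin.succAbove_ne]

end CoordinateProjections

theorem rpow_volume_le_mul_hausdorffMeasure_frontier {d : ℕ} (hd : 0 < d)
    {U : Set (EuclideanSpace ℝ (Fin d))} (hU : Bornology.IsBounded U) (hne : U.Nonempty) :
    volume U ^ (((d : ℝ) - 1) / d) ≤ d * μH[(d : ℝ) - 1] (frontier U) := by
  obtain ⟨n, rfl⟩ : ∃ n, d = n + 1 := ⟨d - 1, by omega⟩
  rw [Nat.cast_succ, add_sub_cancel_right]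
  let K : Set (Fin (n + 1) → ℝ) := WithLp.ofLp '' closure U
  have hK : IsCompact K := hU.isCompact_closure.image (PiLp.continuous_ofLp 2 _)
  have hvolume : volume U ≤ volume K := by
    rw [show K = WithLp.toLp 2 ⁻¹' closure U from congrFun
        (image_eq_preimage_of_inverse (WithLp.toLp_ofLp 2) (WithLp.ofLp_toLp 2)) _,
      (PiLp.volume_preserving_toLp (Fin (n + 1))).measure_preimage
        isClosed_closure.nullMeasurableSet]
    exact measure_mono subset_closure
  have hproj (i : Fin (n + 1)) : volume (i.removeNth '' K) ≤ μH[n] (frontier U) := by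
    rw [image_image]
    simpa using (measure_mono (image_removeNth_closure_subset_image_frontier hU i)).trans
      (volume_image_le_hausdorffMeasure (lipschitzWith_removeNth_ofLp i) (frontier U))
  calc volume U ^ ((n : ℝ) / (n + 1))
      ≤ volume K ^ ((n : ℝ) / (n + 1)) := ENNReal.rpow_le_rpow hvolume (by positivity)
    _ ≤ ∑ i : Fin (n + 1), volume (i.removeNth '' K) :=
      rpow_volume_le_sum_volume_image_removeNth hK (hne.closure.image _)
    _ ≤ ∑ _i : Fin (n + 1), μH[n] (frontier U) := Finset.sum_le_sum fun i _ => hproj i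
    _ = (n + 1 : ℕ) * μH[n] (frontier U) := by simp

/-- Isoperimetric-type inequality: `P(S) ≳ |S|^{(d−1)/d}`. -/
theorem Pm_ge_measure_rpow (d : ℕ) (hd : 1 ≤ d) :
    ∃ c : ℝ, 0 < c ∧ ∀ S : Set (EuclideanSpace ℝ (Fin d)),
      Bornology.IsBounded S → S.Nonempty →
        ENNReal.ofReal c * volume S ^ (((d : ℝ) - 1) / d) ≤ Pm S := by
  have hd' : (0 : ℝ) < d := Nat.cast_pos.2 hd
  refine ⟨(d : ℝ)⁻¹, inv_pos.2 hd', fun S _ hS => le_iInf₂ fun T hT => le_iInf fun hST => ?_⟩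
  refine le_essInf_of_ae_le _ ?_
  filter_upwards [ae_restrict_mem measurableSet_Ioi] with t (ht : 0 < t)
  have hsub : S ⊆ thickening t T := hST.trans (self_subset_thickening ht T)
  calc ENNReal.ofReal (d : ℝ)⁻¹ * volume S ^ (((d : ℝ) - 1) / d)
      ≤ ENNReal.ofReal (d : ℝ)⁻¹ * volume (thickening t T) ^ (((d : ℝ) - 1) / d) := by
        gcongr
        exact div_nonneg (sub_nonneg.2 (Nat.one_le_cast.2 hd)) hd'.le
    _ ≤ ENNReal.ofReal (d : ℝ)⁻¹ * (d * μH[(d : ℝ) - 1] (frontier (thickening t T))) := by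
        gcongr
        exact rpow_volume_le_mul_hausdorffMeasure_frontier hd hT.thickening (hS.mono hsub)
    _ = μH[(d : ℝ) - 1] (frontier (thickening t T)) := by
        rw [← mul_assoc, ENNReal.ofReal_inv_of_pos hd', ENNReal.ofReal_natCast,
          ENNReal.inv_mul_cancel (Nat.cast_ne_zero.2 (Nat.one_le_iff_ne_zero.1 hd))
            (ENNReal.natCast_ne_top d), one_mul]
end

section
/- Let d ≥ 1 and let S₁, S₂ ⊆ ℝ^d be bounded nonempty sets. Then P(S₁ ∪ S₂) ≤ P(S₁) + P(S₂). -/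
open MeasureTheory Set Metric

/-!
Given `ε > 0`, choose bounded `Tᵢ ⊇ Sᵢ` with `P₀(Tᵢ) < P(Sᵢ) + ε/2`, so that the radii `t` with
`H^{d-1}(∂B(Tᵢ,t)) < P(Sᵢ) + ε/2` form a set `Eᵢ` of positive measure. For `t > 0`,
`B(B(T₁,a) ∪ B(T₂,b), t) = B(T₁,a+t) ∪ B(T₂,b+t)`, whose boundary lies in the union of the two
boundaries. If `a`, `b` are Lebesgue density points of `E₁`, `E₂`, the `t > 0` with `a + t ∈ E₁`
and `b + t ∈ E₂` have positive measure, so `P₀(B(T₁,a) ∪ B(T₂,b)) ≤ P(S₁) + P(S₂) + ε`.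

Density points need `Eᵢ` measurable. For `t ≤ R`, `∂B(T,t)` is the level set
`{x ∈ B̄(T,R) : d(x,T) = t}`, and `H^s` of the level sets of a continuous function on a compact
set is Borel in the level: `H^s(A) ≤ b` amounts to countably many conditions on covers of `A` by
open sets, and a level set covered by an open set stays covered at nearby levels.
-/

open Filter Bornology Topology
open scoped ENNReal

lemma isOpen_setOf_inter_preimage_singleton_subset {X Y : Type*} [TopologicalSpace X]
    [TopologicalSpace Y] [T2Space Y] {K W : Set X} (hK : IsCompact K) (hW : IsOpen W)
    {G : X → Y} (hG : Continuous G) : IsOpen {y | K ∩ G ⁻¹' {y} ⊆ W} := by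
  have h : {y | K ∩ G ⁻¹' {y} ⊆ W} = (G '' (K \ W))ᶜ := by
    ext y
    simp only [mem_ofPred_eq, mem_compl_iff, mem_image, Set.mem_sdiff, subset_def, mem_inter_iff,
      mem_preimage, mem_singleton_iff]
    grind
  rw [h]
  exact ((hK.diff hW).image hG).isClosed.isOpen_compl

section Hausdorff

variable {X : Type*} [EMetricSpace X]

lemma exists_isOpen_superset_ediam_lt_iSup_rpow_lt {A : Set X} {r : ℝ≥0∞} (hA : ediam A < r)
    {s : ℝ} (hs : 0 ≤ s) {ε : ℝ≥0∞} (hε : 0 < ε) :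
    ∃ V, IsOpen V ∧ A ⊆ V ∧ ediam V < r ∧
      (⨆ _ : V.Nonempty, ediam V ^ s) < (⨆ _ : A.Nonempty, ediam A ^ s) + ε := by
  have hAtop : ediam A ≠ ⊤ := hA.ne_top
  have hnear : ∀ᶠ c in 𝓝[>] ediam A, c < r ∧ c ^ s < ediam A ^ s + ε :=
    nhdsWithin_le_nhds <| (eventually_lt_nhds hA).and <|
      (ENNReal.continuous_rpow_const.tendsto _).eventually <| eventually_lt_nhds <|
        ENNReal.lt_add_right (ENNReal.rpow_ne_top_of_nonneg hs hAtop) hε.ne'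
  have : (𝓝[>] ediam A).NeBot := nhdsGT_neBot_of_exists_gt ⟨r, hA⟩
  obtain ⟨c, ⟨hcr, hcs⟩, hAc : ediam A < c⟩ := (hnear.and self_mem_nhdsWithin).exists
  obtain ⟨δ, hδ, hδc⟩ := ENNReal.exists_nnreal_pos_mul_lt (ENNReal.ofNat_ne_top (n := 2))
    (tsub_pos_of_lt hAc).ne'
  have hVc : ediam (thickening δ A) < c := by
    refine (ediam_thickening_le δ).trans_lt ?_
    rw [mul_comm]
    exact lt_tsub_iff_left.1 hδc
  refine ⟨thickening δ A, isOpen_thickening, self_subset_thickening (by exact_mod_cast hδ) A,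
    hVc.trans hcr, ?_⟩
  by_cases hne : A.Nonempty
  · have hVne : (thickening δ A).Nonempty :=
      (thickening_nonempty_iff_of_pos (by exact_mod_cast hδ)).2 hne
    rw [iSup_pos hne, iSup_pos hVne]
    exact (ENNReal.rpow_le_rpow hVc.le hs).trans_lt hcs
  · have hVne : ¬(thickening δ A).Nonempty := by
      rwa [thickening_nonempty_iff_of_pos (by exact_mod_cast hδ)]
    rw [iSup_neg hne, iSup_neg hVne]
    simpa using hε

variable [MeasurableSpace X] [BorelSpace X]

lemma exists_isOpen_cover_tsum_lt_of_hausdorffMeasure_lt {A : Set X} {s : ℝ} (hs : 0 ≤ s)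
    {c r : ℝ≥0∞} (hc : μH[s] A < c) (hr : 0 < r) :
    ∃ U : ℕ → Set X, (∀ i, IsOpen (U i)) ∧ A ⊆ ⋃ i, U i ∧ (∀ i, ediam (U i) ≤ r) ∧
      ∑' i, ⨆ _ : (U i).Nonempty, ediam (U i) ^ s < c := by
  obtain ⟨c', hc', hc'c⟩ := exists_between hc
  obtain ⟨r', hr', hr'r⟩ := exists_between hr
  have hcover : (⨅ (t : ℕ → Set X) (_ : A ⊆ ⋃ i, t i) (_ : ∀ i, ediam (t i) ≤ r'),
      ∑' i, ⨆ _ : (t i).Nonempty, ediam (t i) ^ s) < c' := by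
    refine lt_of_le_of_lt ?_ hc'
    rw [Measure.hausdorffMeasure_apply]
    exact le_iSup₂ (f := fun r (_ : 0 < r) => ⨅ (t : ℕ → Set X) (_ : A ⊆ ⋃ i, t i)
      (_ : ∀ i, ediam (t i) ≤ r), ∑' i, ⨆ _ : (t i).Nonempty, ediam (t i) ^ s) r' hr'
  simp only [iInf_lt_iff] at hcover
  obtain ⟨t, hAt, htr', ht⟩ := hcover
  obtain ⟨η, hη, hηc⟩ := ENNReal.exists_pos_sum_of_countable' (tsub_pos_of_lt hc'c).ne' ℕ
  choose U hUo htU hUr hU using fun i =>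
    exists_isOpen_superset_ediam_lt_iSup_rpow_lt ((htr' i).trans_lt hr'r) hs (hη i)
  refine ⟨U, hUo, hAt.trans (iUnion_mono htU), fun i => (hUr i).le, ?_⟩
  calc ∑' i, ⨆ _ : (U i).Nonempty, ediam (U i) ^ s
      ≤ ∑' i, ((⨆ _ : (t i).Nonempty, ediam (t i) ^ s) + η i) :=
        ENNReal.tsum_le_tsum fun i => (hU i).le
    _ = (∑' i, ⨆ _ : (t i).Nonempty, ediam (t i) ^ s) + ∑' i, η i := ENNReal.tsum_add
    _ < c' + (c - c') := ENNReal.add_lt_add ht hηc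
    _ = c := add_tsub_cancel_of_le hc'c.le

lemma hausdorffMeasure_le_of_forall_cover {A : Set X} {s : ℝ} {b : ℝ≥0∞}
    (h : ∀ n : ℕ, ∃ U : ℕ → Set X, A ⊆ ⋃ i, U i ∧ (∀ i, ediam (U i) ≤ (n : ℝ≥0∞)⁻¹) ∧
      ∑' i, ⨆ _ : (U i).Nonempty, ediam (U i) ^ s < b + (n : ℝ≥0∞)⁻¹) :
    μH[s] A ≤ b := by
  rw [Measure.hausdorffMeasure_apply]
  refine iSup₂_le fun r hr => ENNReal.le_of_forall_pos_le_add fun ε hε _ => ?_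
  obtain ⟨n, hn⟩ := ENNReal.exists_inv_nat_lt (lt_min hr (ENNReal.coe_pos.2 hε)).ne'
  obtain ⟨U, hAU, hUn, hU⟩ := h n
  calc _ ≤ ∑' i, ⨆ _ : (U i).Nonempty, ediam (U i) ^ s :=
        iInf₂_le_of_le U hAU <|
          iInf_le_of_le (fun i => (hUn i).trans (hn.le.trans (min_le_left _ _))) le_rfl
    _ ≤ b + (n : ℝ≥0∞)⁻¹ := hU.le
    _ ≤ b + ε := add_le_add_right (hn.le.trans (min_le_right _ _)) _

lemma measurable_hausdorffMeasure_inter_preimage_singleton {Y : Type*} [TopologicalSpace Y]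
    [T2Space Y] [MeasurableSpace Y] [OpensMeasurableSpace Y] {K : Set X} (hK : IsCompact K)
    {G : X → Y} (hG : Continuous G) {s : ℝ} (hs : 0 ≤ s) :
    Measurable fun y => μH[s] (K ∩ G ⁻¹' {y}) := by
  refine measurable_of_Iic fun b => ?_
  rcases eq_or_ne b ⊤ with rfl | hb
  · simp
  have h : (fun y => μH[s] (K ∩ G ⁻¹' {y})) ⁻¹' Iic b =
      ⋂ n : ℕ, ⋃ U ∈ {U : ℕ → Set X | (∀ i, IsOpen (U i)) ∧
        (∀ i, ediam (U i) ≤ (n : ℝ≥0∞)⁻¹) ∧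
        ∑' i, ⨆ _ : (U i).Nonempty, ediam (U i) ^ s < b + (n : ℝ≥0∞)⁻¹},
          {y | K ∩ G ⁻¹' {y} ⊆ ⋃ i, U i} := by
    ext y
    simp only [mem_preimage, mem_Iic, mem_iInter, mem_iUnion, mem_ofPred_eq, exists_prop]
    constructor
    · intro hy n
      obtain ⟨U, hUo, hyU, hUn, hU⟩ := exists_isOpen_cover_tsum_lt_of_hausdorffMeasure_lt hs
        (hy.trans_lt (ENNReal.lt_add_right hb (ENNReal.inv_ne_zero.2 (ENNReal.natCast_ne_top n))))
        (ENNReal.inv_pos.2 (ENNReal.natCast_ne_top n))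
      exact ⟨U, ⟨hUo, hUn, hU⟩, hyU⟩
    · intro hy
      refine hausdorffMeasure_le_of_forall_cover fun n => ?_
      obtain ⟨U, ⟨-, hUn, hU⟩, hyU⟩ := hy n
      exact ⟨U, hyU, hUn, hU⟩
  rw [h]
  exact MeasurableSet.iInter fun n => (isOpen_biUnion fun U hU =>
    isOpen_setOf_inter_preimage_singleton_subset hK (isOpen_iUnion hU.1) hG).measurableSet

end Hausdorff

section NormedSpace

variable {E : Type*} [NormedAddCommGroup E] [NormedSpace ℝ E]

lemma frontier_thickening_eq_preimage_infEDist (T : Set E) {t : ℝ} (ht : 0 < t) :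
    frontier (thickening t T) = (infEDist · T) ⁻¹' {ENNReal.ofReal t} := by
  rw [frontier, isOpen_thickening.interior_eq, closure_thickening ht]
  ext x
  simp only [Set.mem_sdiff, mem_cthickening_iff, mem_thickening_iff_infEDist_lt, not_lt, mem_preimage,
    mem_singleton_iff]
  exact ⟨fun h => le_antisymm h.1 h.2, fun h => ⟨h.le, h.ge⟩⟩

lemma frontier_thickening_eq_cthickening_inter (T : Set E) {t R : ℝ} (ht : 0 < t)
    (htR : t ≤ R) :
    frontier (thickening t T) = cthickening R T ∩ (infEDist · T) ⁻¹' {ENNReal.ofReal t} := by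
  rw [frontier_thickening_eq_preimage_infEDist T ht, inter_eq_self_of_subset_right]
  intro x (hx : infEDist x T = _)
  rw [mem_cthickening_iff, hx]
  exact ENNReal.ofReal_le_ofReal htR

lemma frontier_thickening_thickening_union_subset (T₁ T₂ : Set E) {a b t : ℝ} (ha : 0 < a)
    (hb : 0 < b) (ht : 0 < t) :
    frontier (thickening t (thickening a T₁ ∪ thickening b T₂)) ⊆
      frontier (thickening (a + t) T₁) ∪ frontier (thickening (b + t) T₂) := by
  rw [thickening_union, thickening_thickening ht ha, thickening_thickening ht hb, add_comm t,
    add_comm t]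
  exact (frontier_union_subset _ _).trans (union_subset_union inter_subset_left inter_subset_right)

lemma measurable_hausdorffMeasure_frontier_thickening [ProperSpace E] [MeasurableSpace E]
    [BorelSpace E] {T : Set E} (hT : IsBounded T) {s : ℝ} (hs : 0 ≤ s) :
    Measurable fun t : ℝ => μH[s] (frontier (thickening t T)) := by
  have h : (fun t : ℝ => μH[s] (frontier (thickening t T))) = fun t => ⨆ N : ℕ,
      (Ioo 0 (N : ℝ)).indicator
        (fun t => μH[s] (cthickening N T ∩ (infEDist · T) ⁻¹' {ENNReal.ofReal t})) t := by
    ext t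
    rcases le_or_gt t 0 with ht | ht
    · simp [thickening_of_nonpos ht, ht.not_gt]
    refine le_antisymm ?_ (iSup_le fun N => ?_)
    · obtain ⟨N, hN⟩ := exists_nat_gt t
      refine le_iSup_of_le N ?_
      rw [indicator_of_mem (show t ∈ Ioo 0 (N : ℝ) from ⟨ht, hN⟩), ← frontier_thickening_eq_cthickening_inter T ht hN.le]
    · by_cases htN : t ∈ Ioo 0 (N : ℝ)
      · rw [indicator_of_mem htN, ← frontier_thickening_eq_cthickening_inter T ht htN.2.le]
      · rw [indicator_of_notMem htN]
        exact zero_le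
  rw [h]
  refine Measurable.iSup fun N => Measurable.indicator ?_ measurableSet_Ioo
  exact (measurable_hausdorffMeasure_inter_preimage_singleton
    (isCompact_of_isClosed_isBounded isClosed_cthickening hT.cthickening) continuous_infEDist
    hs).comp ENNReal.measurable_ofReal

end NormedSpace

section Density

lemma exists_mem_tendsto_measure_compl_inter_closedBall_div {β : Type*} [MetricSpace β]
    [MeasurableSpace β] [BorelSpace β] [SecondCountableTopology β] [HasBesicovitchCovering β]
    (μ : Measure β) [IsLocallyFiniteMeasure μ] {A : Set β} (hA : MeasurableSet A) (hA0 : μ A ≠ 0) :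
    ∃ x ∈ A, Tendsto (fun r => μ (Aᶜ ∩ closedBall x r) / μ (closedBall x r)) (𝓝[>] 0) (𝓝 0) := by
  have : (ae (μ.restrict A)).NeBot := ae_neBot.2 (by rwa [Ne, Measure.restrict_eq_zero])
  obtain ⟨x, hxA, hx⟩ := ((ae_restrict_mem hA).and (ae_restrict_of_ae
    (Besicovitch.ae_tendsto_measure_inter_div_of_measurableSet μ hA.compl))).exists
  refine ⟨x, hxA, ?_⟩
  rwa [indicator_of_notMem (notMem_compl_iff.2 hxA)] at hx

lemma eventually_volume_compl_inter_closedBall_lt {A : Set ℝ} {x : ℝ}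
    (hx : Tendsto (fun r => volume (Aᶜ ∩ closedBall x r) / volume (closedBall x r))
      (𝓝[>] 0) (𝓝 0)) :
    ∀ᶠ r in 𝓝[>] 0, volume (Aᶜ ∩ closedBall x r) < ENNReal.ofReal (r / 2) := by
  filter_upwards [hx.eventually (gt_mem_nhds (show (0 : ℝ≥0∞) < ENNReal.ofReal (1 / 4) by simp)),
    self_mem_nhdsWithin] with r hr (hr0 : 0 < r)
  rw [ENNReal.div_lt_iff (Or.inl (by simp [hr0])) (Or.inl measure_closedBall_lt_top.ne),
    Real.volume_closedBall, ← ENNReal.ofReal_mul (by norm_num)] at hr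
  convert hr using 2
  ring

lemma exists_volume_setOf_add_mem_add_mem_ne_zero {E₁ E₂ : Set ℝ} (h₁ : MeasurableSet E₁)
    (h₂ : MeasurableSet E₂) (h₁0 : volume E₁ ≠ 0) (h₂0 : volume E₂ ≠ 0) :
    ∃ a ∈ E₁, ∃ b ∈ E₂, volume {t : ℝ | 0 < t ∧ a + t ∈ E₁ ∧ b + t ∈ E₂} ≠ 0 := by
  obtain ⟨a, ha, ha'⟩ := exists_mem_tendsto_measure_compl_inter_closedBall_div volume h₁ h₁0
  obtain ⟨b, hb, hb'⟩ := exists_mem_tendsto_measure_compl_inter_closedBall_div volume h₂ h₂0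
  obtain ⟨r, ⟨hra, hrb⟩, hr0 : 0 < r⟩ := (((eventually_volume_compl_inter_closedBall_lt ha').and
    (eventually_volume_compl_inter_closedBall_lt hb')).and self_mem_nhdsWithin).exists
  refine ⟨a, ha, b, hb, fun hQ => lt_irrefl (ENNReal.ofReal r) ?_⟩
  have hcover : Ioc 0 r ⊆ {t : ℝ | 0 < t ∧ a + t ∈ E₁ ∧ b + t ∈ E₂} ∪
      ((a + ·) ⁻¹' (E₁ᶜ ∩ closedBall a r) ∪ (b + ·) ⁻¹' (E₂ᶜ ∩ closedBall b r)) := by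
    rintro t ⟨ht0, htr⟩
    have hball : ∀ c : ℝ, c + t ∈ closedBall c r := fun c => by
      rwa [mem_closedBall, dist_eq_norm, add_sub_cancel_left, Real.norm_of_nonneg ht0.le]
    by_cases hta : a + t ∈ E₁
    · by_cases htb : b + t ∈ E₂
      · exact Or.inl ⟨ht0, hta, htb⟩
      · exact Or.inr (Or.inr ⟨htb, hball b⟩)
    · exact Or.inr (Or.inl ⟨hta, hball a⟩)
  calc ENNReal.ofReal r = volume (Ioc 0 r) := by simp
    _ ≤ volume {t : ℝ | 0 < t ∧ a + t ∈ E₁ ∧ b + t ∈ E₂} +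
        (volume ((a + ·) ⁻¹' (E₁ᶜ ∩ closedBall a r)) +
          volume ((b + ·) ⁻¹' (E₂ᶜ ∩ closedBall b r))) :=
      (measure_mono hcover).trans
        ((measure_union_le _ _).trans (add_le_add le_rfl (measure_union_le _ _)))
    _ = volume (E₁ᶜ ∩ closedBall a r) + volume (E₂ᶜ ∩ closedBall b r) := by
      rw [hQ, zero_add, measure_preimage_add, measure_preimage_add]
    _ < ENNReal.ofReal (r / 2) + ENNReal.ofReal (r / 2) := ENNReal.add_lt_add hra hrb
    _ = ENNReal.ofReal r := by rw [← ENNReal.ofReal_add (by positivity) (by positivity), add_halves]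

end Density

section EssInf

variable {α β : Type*} [MeasurableSpace α] [CompleteLinearOrder β] {μ : Measure α} {f : α → β}
  {c : β}

lemma measure_setOf_lt_ne_zero_of_essInf_lt (h : essInf f μ < c) : μ {x | f x < c} ≠ 0 := by
  intro h0
  refine h.not_ge (le_essInf_of_ae_le c ?_)
  rw [EventuallyLE, ae_iff]
  simpa only [not_le] using h0

lemma essInf_le_of_measure_ne_zero {Q : Set α} (hQ : μ Q ≠ 0) (hf : ∀ x ∈ Q, f x ≤ c) :
    essInf f μ ≤ c := by
  by_contra! h
  exact hQ (measure_mono_null (fun x hx => not_lt.2 (hf x hx)) (ae_iff.1 (ae_lt_of_lt_essInf h)))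

end EssInf

lemma exists_essInf_hausdorffMeasure_frontier_thickening_union_le {E : Type*}
    [NormedAddCommGroup E] [NormedSpace ℝ E] [ProperSpace E] [MeasurableSpace E] [BorelSpace E]
    {s : ℝ} (hs : 0 ≤ s) {T₁ T₂ : Set E} (hT₁ : IsBounded T₁) (hT₂ : IsBounded T₂)
    {c₁ c₂ : ℝ≥0∞}
    (h₁ : essInf (fun t => μH[s] (frontier (thickening t T₁))) (volume.restrict (Ioi 0)) < c₁)
    (h₂ : essInf (fun t => μH[s] (frontier (thickening t T₂))) (volume.restrict (Ioi 0)) < c₂) :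
    ∃ a > 0, ∃ b > 0, essInf (fun t => μH[s] (frontier (thickening t
      (thickening a T₁ ∪ thickening b T₂)))) (volume.restrict (Ioi 0)) ≤ c₁ + c₂ := by
  have hm₁ : MeasurableSet {t | μH[s] (frontier (thickening t T₁)) < c₁} :=
    measurable_hausdorffMeasure_frontier_thickening hT₁ hs measurableSet_Iio
  have hm₂ : MeasurableSet {t | μH[s] (frontier (thickening t T₂)) < c₂} :=
    measurable_hausdorffMeasure_frontier_thickening hT₂ hs measurableSet_Iio
  have hE₁ := measure_setOf_lt_ne_zero_of_essInf_lt h₁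
  have hE₂ := measure_setOf_lt_ne_zero_of_essInf_lt h₂
  rw [Measure.restrict_apply hm₁] at hE₁
  rw [Measure.restrict_apply hm₂] at hE₂
  obtain ⟨a, ⟨-, ha : 0 < a⟩, b, ⟨-, hb : 0 < b⟩, hQ⟩ := exists_volume_setOf_add_mem_add_mem_ne_zero
    (hm₁.inter measurableSet_Ioi) (hm₂.inter measurableSet_Ioi) hE₁ hE₂
  rw [← Measure.restrict_eq_self volume (t := Ioi 0) fun t ht => ht.1] at hQ
  refine ⟨a, ha, b, hb, essInf_le_of_measure_ne_zero hQ ?_⟩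
  rintro t ⟨ht, ⟨h₁t, -⟩, ⟨h₂t, -⟩⟩
  calc _ ≤ μH[s] (frontier (thickening (a + t) T₁) ∪ frontier (thickening (b + t) T₂)) :=
        measure_mono (frontier_thickening_thickening_union_subset T₁ T₂ ha hb ht)
    _ ≤ _ := measure_union_le _ _
    _ ≤ c₁ + c₂ := add_le_add h₁t.le h₂t.le

section Perimeter

variable {d : ℕ}

lemma Pm_le_P0 {S T : Set (EuclideanSpace ℝ (Fin d))} (hT : IsBounded T) (hST : S ⊆ T) :
    Pm S ≤ P0 T :=
  iInf₂_le_of_le T hT (iInf_le _ hST)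

lemma exists_P0_lt_of_Pm_lt {S : Set (EuclideanSpace ℝ (Fin d))} {c : ℝ≥0∞} (h : Pm S < c) :
    ∃ T, IsBounded T ∧ S ⊆ T ∧ P0 T < c := by
  simpa only [Pm, iInf_lt_iff, exists_prop] using h

end Perimeter

theorem Pm_union_le_general (d : ℕ) (hd : 1 ≤ d)
    (S₁ S₂ : Set (EuclideanSpace ℝ (Fin d))) :
    Pm (S₁ ∪ S₂) ≤ Pm S₁ + Pm S₂ := by
  have hs : (0 : ℝ) ≤ d - 1 := sub_nonneg.2 (by exact_mod_cast hd)
  refine ENNReal.le_of_forall_pos_le_add fun ε hε hfin => ?_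
  have hε2 : (ε : ℝ≥0∞) / 2 ≠ 0 := by simpa using hε.ne'
  obtain ⟨T₁, hT₁, hST₁, hP₁⟩ := exists_P0_lt_of_Pm_lt
    (ENNReal.lt_add_right (ne_top_of_le_ne_top hfin.ne le_self_add) hε2)
  obtain ⟨T₂, hT₂, hST₂, hP₂⟩ := exists_P0_lt_of_Pm_lt
    (ENNReal.lt_add_right (ne_top_of_le_ne_top hfin.ne le_add_self) hε2)
  obtain ⟨a, ha, b, hb, hP⟩ :=
    exists_essInf_hausdorffMeasure_frontier_thickening_union_le hs hT₁ hT₂ hP₁ hP₂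
  calc Pm (S₁ ∪ S₂) ≤ P0 (thickening a T₁ ∪ thickening b T₂) :=
        Pm_le_P0 (hT₁.thickening.union hT₂.thickening) (union_subset_union
          (hST₁.trans (self_subset_thickening ha _)) (hST₂.trans (self_subset_thickening hb _)))
    _ ≤ (Pm S₁ + ε / 2) + (Pm S₂ + ε / 2) := hP
    _ = Pm S₁ + Pm S₂ + ε := by rw [add_add_add_comm, ENNReal.add_halves]

/-- Subadditivity of the minimal perimeter: `P(S₁ ∪ S₂) ≤ P(S₁) + P(S₂)`. -/
theorem Pm_union_le (d : ℕ) (hd : 1 ≤ d)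
    (S₁ S₂ : Set (EuclideanSpace ℝ (Fin d)))
    (hS₁ : Bornology.IsBounded S₁) (hS₁ne : S₁.Nonempty)
    (hS₂ : Bornology.IsBounded S₂) (hS₂ne : S₂.Nonempty) :
    Pm (S₁ ∪ S₂) ≤ Pm S₁ + Pm S₂ :=
  Pm_union_le_general d hd S₁ S₂
end

section
/- Let d ≥ 1 and let ρ : 𝓘 × 𝓘 → [0,∞) satisfy: ρ(I,J) = 0 whenever one of I, J is a prefix of the other; ρ(I,J) = ρ(J,I) for all I, J; and ρ(J,K) ≥ ρ(I,K) whenever I is a prefix of J. For n ≥ 1 let r_n^* := sup{ρ(J₁,J₂) : J₁, J₂ ∈ 𝓘 have length ≥ n, agree in their first n − 1 entries, and differ in their n-th entry}. If ∑_n 2^{n/d} r_n^* < ∞, then there exists a family (A_I)_{I ∈ 𝓘} of nonempty bounded subsets of ℝ^d such that: A_J ⊆ A_I whenever I is a prefix of J; A_I ∩ A_J = ∅ whenever neither of I, J is a prefix of the other; and dist(A_I, A_J) ≥ ρ(I,J) whenever neither of I, J is a prefix of the other. -/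
open Set

/-!
Send a sequence `K` to the point of `ℝ^d` whose coordinate `i` is `∑ ± c_k` over the positions
`k ≡ i (mod d)` of `K`, the sign being the digit `K[k]`. The weights
`c_m = ∑_j 2^j a_{m + j d}` satisfy `c_m = a_m + 2 c_{m+d}`, so the later digits sharing a
coordinate with position `m` move that coordinate by at most `2 ∑_{q ≥ 1} c_{m + q d} ≤ 4 c_{m+d}`.
Two sequences whose first difference is at position `m` therefore have points at distance at least
`2 c_m - 4 c_{m+d} = 2 a_m`. Taking `a_m ≥ r*_{m+1}`, summability of `∑ 2^{n/d} r*_n` makes the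
`c_m` finite, and `A_I` is the set of points of all extensions of `I`.
-/

namespace TreeEmbedding

variable {d : ℕ} {a : ℕ → ℝ}

noncomputable def spread (d : ℕ) (a : ℕ → ℝ) (m : ℕ) : ℝ :=
  ∑' j : ℕ, 2 ^ j * a (m + j * d)

lemma spread_nonneg (ha : ∀ n, 0 ≤ a n) (m : ℕ) : 0 ≤ spread d a m :=
  tsum_nonneg fun j => mul_nonneg (by positivity) (ha _)

lemma spread_eq_add {m : ℕ} (hs : Summable fun j : ℕ => (2 : ℝ) ^ j * a (m + j * d)) :
    spread d a m = a m + 2 * spread d a (m + d) := by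
  rw [spread, hs.tsum_eq_zero_add, spread, ← tsum_mul_left]
  congr 1
  · simp
  · refine tsum_congr fun j => ?_
    rw [show m + (j + 1) * d = m + d + j * d by ring, pow_succ]
    ring

def digit : Option Bool → ℝ
  | none => 0
  | some true => 1
  | some false => -1

lemma abs_digit_le_one (o : Option Bool) : |digit o| ≤ 1 := by
  rcases o with _ | _ | _ <;> simp [digit]

lemma abs_digit_sub_digit_le (o o' : Option Bool) : |digit o - digit o'| ≤ 2 :=
  (abs_sub _ _).trans (by linarith [abs_digit_le_one o, abs_digit_le_one o'])

lemma abs_digit_sub_digit_of_ne {b b' : Bool} (h : b ≠ b') :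
    |digit (some b) - digit (some b')| = 2 := by
  cases b <;> cases b' <;> simp_all [digit] <;> norm_num

noncomputable def treePoint (d : ℕ) (a : ℕ → ℝ) (K : List Bool) : EuclideanSpace ℝ (Fin d) :=
  WithLp.toLp 2 fun i =>
    ∑ q ∈ Finset.range K.length, digit K[(i : ℕ) + q * d]? * spread d a (i + q * d)

lemma treePoint_apply_eq_sum {K : List Bool} {N : ℕ} (hN : K.length ≤ N) (i : Fin d) :
    treePoint d a K i
      = ∑ q ∈ Finset.range N, digit K[(i : ℕ) + q * d]? * spread d a (i + q * d) := by
  refine Finset.sum_subset (Finset.range_subset_range.2 hN) fun q _ hq => ?_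
  have hq : K.length ≤ q := by simpa using hq
  rw [List.getElem?_eq_none (by nlinarith [i.pos]), digit, zero_mul]

lemma treePoint_sub_apply_eq_sum (hd : 0 < d) {K₁ K₂ : List Bool} {m : ℕ}
    (hagree : ∀ k < m, K₁[k]? = K₂[k]?) :
    treePoint d a K₁ ⟨m % d, Nat.mod_lt _ hd⟩ - treePoint d a K₂ ⟨m % d, Nat.mod_lt _ hd⟩
      = ∑ q ∈ Finset.range (K₁.length + K₂.length),
          (digit K₁[m + q * d]? - digit K₂[m + q * d]?) * spread d a (m + q * d) := by
  have hm : m % d + m / d * d = m := Nat.mod_add_div' m d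
  rw [treePoint_apply_eq_sum ((Nat.le_add_right _ _).trans (Nat.le_add_left _ (m / d))),
    treePoint_apply_eq_sum ((Nat.le_add_left _ _).trans (Nat.le_add_left _ (m / d))),
    ← Finset.sum_sub_distrib, Finset.sum_range_add, Finset.sum_eq_zero, zero_add]
  · refine Finset.sum_congr rfl fun q _ => ?_
    rw [show m % d + (m / d + q) * d = m + q * d by rw [add_mul, ← add_assoc, hm]]
    ring
  · intro q hq
    have : q * d < m / d * d := Nat.mul_lt_mul_of_pos_right (Finset.mem_range.1 hq) hd
    rw [hagree _ (show m % d + q * d < m by omega), ← sub_mul, sub_self, zero_mul]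

section Summable

variable (ha : ∀ n, 0 ≤ a n) (hs : ∀ m, Summable fun j : ℕ => (2 : ℝ) ^ j * a (m + j * d))
include ha hs

lemma sum_range_spread_le (N k : ℕ) :
    ∑ q ∈ Finset.range N, spread d a (k + q * d) ≤ 2 * spread d a k := by
  induction N generalizing k with
  | zero => simpa using spread_nonneg ha k
  | succ N ih =>
    rw [Finset.sum_range_succ', zero_mul, add_zero]
    simp only [show ∀ q, k + (q + 1) * d = k + d + q * d from fun q => by ring]
    linarith [ih (k + d), spread_eq_add (hs k), ha k]

lemma abs_sum_mul_spread_le {η : ℕ → ℝ} {C : ℝ} (hη : ∀ q, |η q| ≤ C) (N k : ℕ) :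
    |∑ q ∈ Finset.range N, η q * spread d a (k + q * d)| ≤ 2 * C * spread d a k :=
  calc |∑ q ∈ Finset.range N, η q * spread d a (k + q * d)|
      ≤ ∑ q ∈ Finset.range N, C * spread d a (k + q * d) := by
        refine (Finset.abs_sum_le_sum_abs _ _).trans (Finset.sum_le_sum fun q _ => ?_)
        rw [abs_mul, abs_of_nonneg (spread_nonneg ha _)]
        exact mul_le_mul_of_nonneg_right (hη q) (spread_nonneg ha _)
    _ ≤ C * (2 * spread d a k) := by
        rw [← Finset.mul_sum]
        exact mul_le_mul_of_nonneg_left (sum_range_spread_le ha hs N k)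
          ((abs_nonneg _).trans (hη 0))
    _ = 2 * C * spread d a k := by ring

lemma two_mul_le_abs_sum_mul_spread {η : ℕ → ℝ} (hη₀ : |η 0| = 2) (hη : ∀ q, |η q| ≤ 2)
    {N : ℕ} (hN : 0 < N) (k : ℕ) :
    2 * a k ≤ |∑ q ∈ Finset.range N, η q * spread d a (k + q * d)| := by
  obtain ⟨N, rfl⟩ := Nat.exists_eq_add_one.2 hN
  have htail := abs_sum_mul_spread_le ha hs (η := fun q => η (q + 1)) (fun q => hη _) N (k + d)
  rw [Finset.sum_range_succ', zero_mul, add_zero, add_comm]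
  simp only [show ∀ q, k + (q + 1) * d = k + d + q * d from fun q => by ring]
  have hhead : |η 0 * spread d a k| = 2 * spread d a k := by
    rw [abs_mul, hη₀, abs_of_nonneg (spread_nonneg ha k)]
  linarith [abs_sub_abs_le_abs_add (η 0 * spread d a k)
    (∑ q ∈ Finset.range N, η (q + 1) * spread d a (k + d + q * d)), spread_eq_add (hs k)]

lemma isBounded_range_treePoint : Bornology.IsBounded (range (treePoint d a)) := by
  refine isBounded_iff_forall_norm_le.2 ⟨√(∑ i : Fin d, (2 * spread d a i) ^ 2),
    forall_mem_range.2 fun K => ?_⟩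
  rw [EuclideanSpace.norm_eq]
  gcongr with i
  rw [Real.norm_eq_abs, treePoint_apply_eq_sum le_rfl]
  simpa using abs_sum_mul_spread_le ha hs
    (fun q => abs_digit_le_one K[(i : ℕ) + q * d]?) K.length i

lemma two_mul_le_dist_treePoint (hd : 0 < d) {K₁ K₂ : List Bool} {m : ℕ}
    (hm₁ : m < K₁.length) (hm₂ : m < K₂.length) (htake : K₁.take m = K₂.take m)
    (hne : K₁[m]? ≠ K₂[m]?) :
    2 * a m ≤ dist (treePoint d a K₁) (treePoint d a K₂) := by
  have hagree : ∀ k < m, K₁[k]? = K₂[k]? := fun k hk => by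
    rw [← List.getElem?_take_of_lt hk, htake, List.getElem?_take_of_lt hk]
  have hη₀ : |digit K₁[m + 0 * d]? - digit K₂[m + 0 * d]?| = 2 := by
    rw [List.getElem?_eq_getElem hm₁, List.getElem?_eq_getElem hm₂] at hne
    rw [zero_mul, add_zero, List.getElem?_eq_getElem hm₁, List.getElem?_eq_getElem hm₂]
    exact abs_digit_sub_digit_of_ne fun h => hne (by rw [h])
  calc 2 * a m
      ≤ |∑ q ∈ Finset.range (K₁.length + K₂.length),
          (digit K₁[m + q * d]? - digit K₂[m + q * d]?) * spread d a (m + q * d)| :=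
        two_mul_le_abs_sum_mul_spread ha hs hη₀ (fun q => abs_digit_sub_digit_le _ _)
          (by omega) m
    _ = dist (treePoint d a K₁ ⟨m % d, Nat.mod_lt _ hd⟩)
          (treePoint d a K₂ ⟨m % d, Nat.mod_lt _ hd⟩) := by
        rw [Real.dist_eq, treePoint_sub_apply_eq_sum hd hagree]
    _ ≤ dist (treePoint d a K₁) (treePoint d a K₂) := PiLp.dist_apply_le _ _ _

end Summable

lemma summable_two_pow_mul_comp_add_mul (hd : 0 < d) {f : ℕ → ℝ}
    (hf : Summable fun n : ℕ => (2 : ℝ) ^ ((n : ℝ) / d) * f n) (k : ℕ) :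
    Summable fun j : ℕ => (2 : ℝ) ^ j * f (k + j * d) := by
  have hinj : Function.Injective fun j : ℕ => k + j * d := fun x y h => by
    simpa [hd.ne'] using h
  refine ((hf.comp_injective hinj).mul_left ((2 : ℝ) ^ (-(k : ℝ) / d))).congr fun j => ?_
  simp only [Function.comp_apply, ← mul_assoc, ← Real.rpow_add two_pos]
  rw [← Real.rpow_natCast 2 j]
  congr 2
  push_cast
  field_simp
  ring

lemma summable_two_pow_mul_quarter_pow (hd : 0 < d) (k : ℕ) :
    Summable fun j : ℕ => (2 : ℝ) ^ j * (1 / 4) ^ (k + j * d) := by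
  refine summable_geometric_two.of_nonneg_of_le (fun j => by positivity) fun j => ?_
  calc (2 : ℝ) ^ j * (1 / 4) ^ (k + j * d) ≤ 2 ^ j * (1 / 4) ^ j :=
        mul_le_mul_of_nonneg_left (pow_le_pow_of_le_one (by norm_num) (by norm_num)
          (le_add_left (Nat.le_mul_of_pos_right j hd))) (by positivity)
    _ = (1 / 2) ^ j := by rw [← mul_pow]; norm_num

/-- The summand `(1/4)^n` makes every radius positive, which is what separates distinct points;
the shift `n + 1` turns positions, counted from `0`, into the levels of `r*`, counted from `1`. -/
noncomputable def radius (rstar : ℕ → ℝ) (n : ℕ) : ℝ :=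
  |rstar (n + 1)| + (1 / 4) ^ n

lemma radius_pos (rstar : ℕ → ℝ) (n : ℕ) : 0 < radius rstar n := by
  unfold radius
  positivity

lemma summable_two_pow_mul_radius (hd : 0 < d) {rstar : ℕ → ℝ}
    (h_sum : Summable fun n : ℕ => (2 : ℝ) ^ ((n : ℝ) / d) * rstar n) (m : ℕ) :
    Summable fun j : ℕ => (2 : ℝ) ^ j * radius rstar (m + j * d) :=
  ((summable_two_pow_mul_comp_add_mul hd h_sum (m + 1)).abs.add
    (summable_two_pow_mul_quarter_pow hd m)).congr fun j => by
      rw [radius, abs_mul, abs_of_pos (by positivity), mul_add, add_right_comm]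

lemma not_prefix_of_prefix_of_prefix {α : Type*} {I J K₁ K₂ : List α} (hI : I <+: K₁)
    (hJ : J <+: K₂) (h₁ : ¬I <+: J) (h₂ : ¬J <+: I) : ¬K₁ <+: K₂ := fun h =>
  (List.prefix_or_prefix_of_prefix (hI.trans h) hJ).elim h₁ h₂

lemma exists_take_eq_getElem?_ne {α : Type*} :
    ∀ {I J : List α}, ¬I <+: J → ¬J <+: I →
      ∃ m, m < I.length ∧ m < J.length ∧ I.take m = J.take m ∧ I[m]? ≠ J[m]?
  | [], _, h₁, _ => absurd List.nil_prefix h₁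
  | _ :: _, [], _, h₂ => absurd List.nil_prefix h₂
  | x :: I, y :: J, h₁, h₂ => by
    by_cases hxy : x = y
    · subst hxy
      obtain ⟨m, hI, hJ, htake, hne⟩ := exists_take_eq_getElem?_ne
        (mt (List.prefix_cons_inj x).2 h₁) (mt (List.prefix_cons_inj x).2 h₂)
      exact ⟨m + 1, by simpa, by simpa, by simpa, by simpa⟩
    · exact ⟨0, by simp, by simp, by simp, by simpa⟩

lemma exists_nested_separated_family {α E : Type*} [PseudoMetricSpace E] (X : List α → E)
    (ρ : List α → List α → ℝ) (hρ_symm : ∀ I J, ρ I J = ρ J I)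
    (hρ_mono : ∀ I J K : List α, I <+: J → ρ I K ≤ ρ J K) (hX : Bornology.IsBounded (range X))
    (hsep : ∀ K₁ K₂, ¬K₁ <+: K₂ → ¬K₂ <+: K₁ →
      ρ K₁ K₂ ≤ dist (X K₁) (X K₂) ∧ 0 < dist (X K₁) (X K₂)) :
    ∃ A : List α → Set E,
      (∀ I, (A I).Nonempty ∧ Bornology.IsBounded (A I)) ∧
      (∀ I J : List α, I <+: J → A J ⊆ A I) ∧
      (∀ I J : List α, ¬ I <+: J → ¬ J <+: I →
        A I ∩ A J = ∅ ∧ ∀ x ∈ A I, ∀ y ∈ A J, ρ I J ≤ dist x y) := by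
  refine ⟨fun I => X '' {K | I <+: K}, fun I => ⟨⟨X I, I, List.prefix_rfl, rfl⟩,
    hX.subset (image_subset_range _ _)⟩, ?_, fun I J h₁ h₂ => ?_⟩
  · rintro I J hIJ _ ⟨K, hK, rfl⟩
    exact ⟨K, hIJ.trans hK, rfl⟩
  have hext : ∀ {K₁ K₂}, I <+: K₁ → J <+: K₂ →
      ρ I J ≤ dist (X K₁) (X K₂) ∧ 0 < dist (X K₁) (X K₂) := fun {K₁ K₂} hK₁ hK₂ => by
    obtain ⟨hle, hpos⟩ := hsep K₁ K₂ (not_prefix_of_prefix_of_prefix hK₁ hK₂ h₁ h₂)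
      (not_prefix_of_prefix_of_prefix hK₂ hK₁ h₂ h₁)
    refine ⟨le_trans ?_ hle, hpos⟩
    calc ρ I J ≤ ρ K₁ J := hρ_mono I K₁ J hK₁
      _ = ρ J K₁ := hρ_symm _ _
      _ ≤ ρ K₂ K₁ := hρ_mono J K₂ K₁ hK₂
      _ = ρ K₁ K₂ := hρ_symm _ _
  refine ⟨eq_empty_iff_forall_notMem.2 ?_, ?_⟩
  · rintro _ ⟨⟨K₁, hK₁, rfl⟩, K₂, hK₂, hX⟩
    simpa [hX] using (hext hK₁ hK₂).2
  · rintro _ ⟨K₁, hK₁, rfl⟩ _ ⟨K₂, hK₂, rfl⟩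
    exact (hext hK₁ hK₂).1

end TreeEmbedding

open TreeEmbedding

theorem embedding_construction_general (d : ℕ) (hd : 1 ≤ d)
    (ρ : List Bool → List Bool → ℝ)
    (hρ_symm : ∀ I J, ρ I J = ρ J I)
    (hρ_mono : ∀ I J K : List Bool, I <+: J → ρ I K ≤ ρ J K)
    (rstar : ℕ → ℝ)
    (h_rstar : ∀ n : ℕ, 1 ≤ n → ∀ J₁ J₂ : List Bool,
      n ≤ J₁.length → n ≤ J₂.length →
      J₁.take (n - 1) = J₂.take (n - 1) → J₁[n - 1]? ≠ J₂[n - 1]? →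
      ρ J₁ J₂ ≤ rstar n)
    (h_sum : Summable fun n : ℕ => (2 : ℝ) ^ ((n : ℝ) / d) * rstar n) :
    ∃ A : List Bool → Set (EuclideanSpace ℝ (Fin d)),
      (∀ I, (A I).Nonempty ∧ Bornology.IsBounded (A I)) ∧
      (∀ I J : List Bool, I <+: J → A J ⊆ A I) ∧
      (∀ I J : List Bool, ¬ I <+: J → ¬ J <+: I →
        A I ∩ A J = ∅ ∧ ∀ x ∈ A I, ∀ y ∈ A J, ρ I J ≤ dist x y) := by
  have ha : ∀ n, 0 ≤ radius rstar n := fun n => (radius_pos rstar n).le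
  have hs := summable_two_pow_mul_radius hd h_sum
  refine exists_nested_separated_family (treePoint d (radius rstar)) ρ hρ_symm hρ_mono
    (isBounded_range_treePoint ha hs) fun K₁ K₂ h₁ h₂ => ?_
  obtain ⟨m, hm₁, hm₂, htake, hne⟩ := exists_take_eq_getElem?_ne h₁ h₂
  have hdist := two_mul_le_dist_treePoint ha hs hd hm₁ hm₂ htake hne
  have hρ := h_rstar (m + 1) m.succ_pos K₁ K₂ hm₁ hm₂ htake hne
  have hr : rstar (m + 1) < radius rstar m :=
    lt_add_of_le_of_pos (le_abs_self _) (by positivity)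
  constructor <;> linarith [radius_pos rstar m]

/-- **Theorem (construction / sharpness).** Finite `{0,1}`-sequences are modelled as
lists of booleans; `I <+: J` means `I` is a prefix of `J`. Given a distance function
`ρ` on pairs of sequences (vanishing on comparable pairs, symmetric, monotone under
extension), and a sequence `rstar` such that `rstar n` bounds `ρ(J₁,J₂)` whenever
`J₁, J₂` have length `≥ n`, agree in their first `n−1` entries and differ in the
`n`-th entry (so that `sup` of those values is `≤ rstar n`), if `∑ 2^{n/d} rstar n < ∞`
then there is a family of nonempty bounded sets `A_I ⊆ ℝ^d`, nested along prefixes,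
disjoint for incomparable sequences, with `dist(A_I, A_J) ≥ ρ(I,J)`. -/
theorem embedding_construction (d : ℕ) (hd : 1 ≤ d)
    (ρ : List Bool → List Bool → ℝ)
    (hρ_nonneg : ∀ I J, 0 ≤ ρ I J)
    (hρ_zero : ∀ I J : List Bool, (I <+: J ∨ J <+: I) → ρ I J = 0)
    (hρ_symm : ∀ I J, ρ I J = ρ J I)
    (hρ_mono : ∀ I J K : List Bool, I <+: J → ρ I K ≤ ρ J K)
    (rstar : ℕ → ℝ)
    (h_rstar : ∀ n : ℕ, 1 ≤ n → ∀ J₁ J₂ : List Bool,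
      n ≤ J₁.length → n ≤ J₂.length →
      J₁.take (n - 1) = J₂.take (n - 1) → J₁[n - 1]? ≠ J₂[n - 1]? →
      ρ J₁ J₂ ≤ rstar n)
    (h_sum : Summable fun n : ℕ => (2 : ℝ) ^ ((n : ℝ) / d) * rstar n) :
    ∃ A : List Bool → Set (EuclideanSpace ℝ (Fin d)),
      (∀ I, (A I).Nonempty ∧ Bornology.IsBounded (A I)) ∧
      (∀ I J : List Bool, I <+: J → A J ⊆ A I) ∧
      (∀ I J : List Bool, ¬ I <+: J → ¬ J <+: I →
        A I ∩ A J = ∅ ∧ ∀ x ∈ A I, ∀ y ∈ A J, ρ I J ≤ dist x y) :=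
  embedding_construction_general d hd ρ hρ_symm hρ_mono rstar h_rstar h_sum
end

section
/- Let d ≥ 2 and let ω : [0,∞) → [0,∞) be continuous, strictly increasing, convex, with ω(0) = 0, such that r ↦ ω(r)/r^d is monotone decreasing on (0,∞). Suppose (r_n)_{n ≥ n₀} is a sequence of positive reals with ω(r_n) = 2^{−(n+1)} for every n ≥ n₀. Then ∑_{n ≥ n₀} 2^{n/d} r_n < ∞ if and only if ∫_0^1 ω(r)^{−1/d} dr < ∞. -/
/-!
The points `r n` decrease to `0` and cut `(0, r n₀]` into the pieces `(r (n+1), r n]`, on which `ω`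
lies between `2^{-(n+2)}` and `2^{-(n+1)}`, so that `ω^{-1/d}` is `2^{n/d}` up to a factor
`2^{1/d}`. Since `ω(r)/r^d` decreases, halving `ω` shrinks `r` at least by the factor `2^{-1/d}`,
so the length of each piece is comparable to `r n` itself. Hence the integral of `ω^{-1/d}` over
the piece is comparable to `2^{n/d} r n`. Away from `0` the integrand is bounded, so the upper
limit `1` in place of `r n₀` does not matter.
-/

open MeasureTheory Set Filter Topology ENNReal

open scoped Interval

lemma summable_iff_tsum_ofReal_lt_top {α : Type*} {f : α → ℝ} (hf : ∀ i, 0 ≤ f i) :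
    Summable f ↔ ∑' i, ENNReal.ofReal (f i) < ∞ :=
  ⟨Summable.tsum_ofReal_lt_top, fun h => by
    simpa [ENNReal.toReal_ofReal (hf _)] using ENNReal.summable_toReal h.ne⟩

lemma tsum_lt_top_iff_of_le_mul_of_le_mul {α : Type*} {a b : α → ℝ≥0∞} {c C : ℝ≥0∞}
    (hc : c ≠ 0) (hC : C ≠ ∞) (hlo : ∀ i, c * a i ≤ b i) (hhi : ∀ i, b i ≤ C * a i) :
    ∑' i, b i < ∞ ↔ ∑' i, a i < ∞ := by
  constructor
  · intro hb
    have hca : c * ∑' i, a i < ∞ :=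
      (ENNReal.tsum_mul_left.symm.trans_le (ENNReal.tsum_le_tsum hlo)).trans_lt hb
    exact ENNReal.lt_top_of_mul_ne_top_right hca.ne hc
  · intro ha
    calc ∑' i, b i ≤ ∑' i, C * a i := ENNReal.tsum_le_tsum hhi
      _ = C * ∑' i, a i := ENNReal.tsum_mul_left
      _ < ∞ := ENNReal.mul_lt_top hC.lt_top ha

section Intervals

variable {α : Type*} [LinearOrder α]

lemma Antitone.iUnion_Ioc_succ_eq [TopologicalSpace α] [OrderTopology α] {s : ℕ → α}
    {a : α} (hs : Antitone s) (h : Tendsto s atTop (𝓝 a)) :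
    ⋃ n, Ioc (s (n + 1)) (s n) = Ioc a (s 0) := by
  ext t
  simp only [mem_iUnion, mem_Ioc]
  constructor
  · rintro ⟨n, hlt, hle⟩
    exact ⟨(hs.le_of_tendsto h (n + 1)).trans_lt hlt, hle.trans (hs (Nat.zero_le n))⟩
  · rintro ⟨hat, hts⟩
    have hex : ∃ n, s n < t := (h.eventually (gt_mem_nhds hat)).exists
    obtain ⟨m, hm⟩ : ∃ m, Nat.find hex = m + 1 :=
      Nat.exists_eq_succ_of_ne_zero fun h0 => (Nat.find_spec hex).not_ge (h0 ▸ hts)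
    exact ⟨m, hm ▸ Nat.find_spec hex, not_lt.1 (Nat.find_min hex (by omega))⟩

lemma Antitone.setLIntegral_Ioc_eq_tsum [TopologicalSpace α] [OrderTopology α]
    [MeasurableSpace α] [OpensMeasurableSpace α] {s : ℕ → α} {a : α} (hs : Antitone s)
    (h : Tendsto s atTop (𝓝 a)) (μ : Measure α) (f : α → ℝ≥0∞) :
    ∫⁻ t in Ioc a (s 0), f t ∂μ = ∑' n, ∫⁻ t in Ioc (s (n + 1)) (s n), f t ∂μ := by
  rw [← hs.iUnion_Ioc_succ_eq h]
  exact lintegral_iUnion (fun _ => measurableSet_Ioc) hs.pairwise_disjoint_on_Ioc_succ f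

lemma setLIntegral_Ioc_lt_top_of_uIoc [MeasurableSpace α] {μ : Measure α} {f : α → ℝ≥0∞}
    {a b c : α} (hbc : ∫⁻ t in Ι b c, f t ∂μ < ∞) (hab : ∫⁻ t in Ioc a b, f t ∂μ < ∞) :
    ∫⁻ t in Ioc a c, f t ∂μ < ∞ :=
  calc ∫⁻ t in Ioc a c, f t ∂μ ≤ ∫⁻ t in Ioc a b ∪ Ι b c, f t ∂μ :=
        lintegral_mono_set (Ioc_subset_Ioc_union_Ioc.trans (union_subset_union_right _
          Ioc_subset_uIoc))
    _ ≤ (∫⁻ t in Ioc a b, f t ∂μ) + ∫⁻ t in Ι b c, f t ∂μ := lintegral_union_le _ _ _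
    _ < ∞ := ENNReal.add_lt_top.2 ⟨hab, hbc⟩

lemma setLIntegral_Ioc_lt_top_iff_of_uIoc [MeasurableSpace α] {μ : Measure α}
    {f : α → ℝ≥0∞} {a b c : α} (h : ∫⁻ t in Ι b c, f t ∂μ < ∞) :
    ∫⁻ t in Ioc a b, f t ∂μ < ∞ ↔ ∫⁻ t in Ioc a c, f t ∂μ < ∞ :=
  ⟨setLIntegral_Ioc_lt_top_of_uIoc h, setLIntegral_Ioc_lt_top_of_uIoc (uIoc_comm b c ▸ h)⟩

end Intervals

lemma ofReal_mul_le_setLIntegral_Ioc {g : ℝ → ℝ} {a b m : ℝ} (h : ∀ t ∈ Ioc a b, m ≤ g t) :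
    ENNReal.ofReal m * ENNReal.ofReal (b - a) ≤ ∫⁻ t in Ioc a b, ENNReal.ofReal (g t) := by
  rw [← Real.volume_Ioc, ← setLIntegral_const]
  exact setLIntegral_mono' measurableSet_Ioc fun t ht => ENNReal.ofReal_le_ofReal (h t ht)

lemma setLIntegral_Ioc_le_ofReal_mul {g : ℝ → ℝ} {a b M : ℝ} (h : ∀ t ∈ Ioc a b, g t ≤ M) :
    ∫⁻ t in Ioc a b, ENNReal.ofReal (g t) ≤ ENNReal.ofReal M * ENNReal.ofReal (b - a) := by
  rw [← Real.volume_Ioc, ← setLIntegral_const]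
  exact setLIntegral_mono' measurableSet_Ioc fun t ht => ENNReal.ofReal_le_ofReal (h t ht)

section Halving

variable {d : ℕ} {ω : ℝ → ℝ} {s : ℕ → ℝ}

lemma mul_pow_le_mul_pow_of_antitoneOn_div_pow
    (hω_dec : AntitoneOn (fun t : ℝ => ω t / t ^ d) (Ioi 0)) {x y : ℝ} (hx : 0 < x)
    (hxy : x ≤ y) : ω y * x ^ d ≤ ω x * y ^ d := by
  have h := hω_dec hx (hx.trans_le hxy) hxy
  rwa [div_le_div_iff₀ (pow_pos (hx.trans_le hxy) d) (pow_pos hx d)] at h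

lemma le_two_rpow_neg_mul_of_antitoneOn_div_pow (hd : d ≠ 0)
    (hω_dec : AntitoneOn (fun t : ℝ => ω t / t ^ d) (Ioi 0)) {x y : ℝ} (hx : 0 < x)
    (hxy : x ≤ y) (hωx : 0 < ω x) (hωy : ω y = 2 * ω x) :
    x ≤ 2 ^ (-(1 / d : ℝ)) * y := by
  have h := mul_pow_le_mul_pow_of_antitoneOn_div_pow hω_dec hx hxy
  rw [hωy, mul_assoc, mul_left_comm] at h
  have h2 : 2 * x ^ d ≤ y ^ d := le_of_mul_le_mul_left h hωx
  rw [← pow_le_pow_iff_left₀ hx.le (mul_nonneg (by positivity) (hx.le.trans hxy)) hd, mul_pow,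
    ← Real.rpow_mul_natCast zero_le_two, neg_mul, one_div_mul_cancel (by exact_mod_cast hd),
    Real.rpow_neg_one]
  linarith

lemma two_rpow_neg_one_div_lt_one (hd : d ≠ 0) : (2 : ℝ) ^ (-(1 / d : ℝ)) < 1 :=
  Real.rpow_lt_one_of_one_lt_of_neg one_lt_two (neg_lt_zero.2 (by positivity))

structure IsHalvingSeq (ω : ℝ → ℝ) (s : ℕ → ℝ) : Prop where
  pos : ∀ n, 0 < s n
  pos_comp : ∀ n, 0 < ω (s n)
  comp_eq_two_mul : ∀ n, ω (s n) = 2 * ω (s (n + 1))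

namespace IsHalvingSeq

lemma antitone (hs : IsHalvingSeq ω s) (hω_mono : StrictMonoOn ω (Ici 0)) : Antitone s :=
  antitone_nat_of_succ_le fun n => (hω_mono.le_iff_le (hs.pos _).le (hs.pos _).le).1
    (by linarith [hs.comp_eq_two_mul n, hs.pos_comp (n + 1)])

lemma succ_le_two_rpow_neg_mul (hs : IsHalvingSeq ω s) (hd : d ≠ 0)
    (hω_mono : StrictMonoOn ω (Ici 0)) (hω_dec : AntitoneOn (fun t : ℝ => ω t / t ^ d) (Ioi 0))
    (n : ℕ) : s (n + 1) ≤ 2 ^ (-(1 / d : ℝ)) * s n :=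
  le_two_rpow_neg_mul_of_antitoneOn_div_pow hd hω_dec (hs.pos _)
    (hs.antitone hω_mono n.le_succ) (hs.pos_comp _) (hs.comp_eq_two_mul n)

lemma tendsto_zero (hs : IsHalvingSeq ω s) (hd : d ≠ 0) (hω_mono : StrictMonoOn ω (Ici 0))
    (hω_dec : AntitoneOn (fun t : ℝ => ω t / t ^ d) (Ioi 0)) : Tendsto s atTop (𝓝 0) := by
  refine (summable_of_ratio_norm_eventually_le (two_rpow_neg_one_div_lt_one hd)
    (Eventually.of_forall fun n => ?_)).tendsto_atTop_zero
  rw [Real.norm_of_nonneg (hs.pos _).le, Real.norm_of_nonneg (hs.pos _).le]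
  exact hs.succ_le_two_rpow_neg_mul hd hω_mono hω_dec n

lemma setLIntegral_Ioc_succ_le (hs : IsHalvingSeq ω s) (hω_mono : StrictMonoOn ω (Ici 0))
    {p : ℝ} (hp : 0 ≤ p) (n : ℕ) :
    ∫⁻ t in Ioc (s (n + 1)) (s n), ENNReal.ofReal (ω t ^ (-p)) ≤
      ENNReal.ofReal (2 ^ p) * ENNReal.ofReal (ω (s n) ^ (-p) * s n) := by
  have hc : 0 ≤ ω (s n) ^ (-p) := Real.rpow_nonneg (hs.pos_comp n).le _
  have hbound : ∀ t ∈ Ioc (s (n + 1)) (s n), ω t ^ (-p) ≤ 2 ^ p * ω (s n) ^ (-p) := by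
    intro t ht
    have hωt : ω (s (n + 1)) ≤ ω t :=
      hω_mono.monotoneOn (hs.pos _).le ((hs.pos _).trans ht.1).le ht.1.le
    calc ω t ^ (-p) ≤ ω (s (n + 1)) ^ (-p) :=
          Real.rpow_le_rpow_of_nonpos (hs.pos_comp _) hωt (neg_nonpos.2 hp)
      _ = 2 ^ p * ω (s n) ^ (-p) := by
        rw [hs.comp_eq_two_mul n, Real.mul_rpow zero_le_two (hs.pos_comp _).le, ← mul_assoc,
          ← Real.rpow_add two_pos, add_neg_cancel, Real.rpow_zero, one_mul]
  calc _ ≤ ENNReal.ofReal (2 ^ p * ω (s n) ^ (-p)) * ENNReal.ofReal (s n - s (n + 1)) :=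
        setLIntegral_Ioc_le_ofReal_mul hbound
    _ ≤ ENNReal.ofReal (2 ^ p * ω (s n) ^ (-p)) * ENNReal.ofReal (s n) := by
        gcongr
        linarith [hs.pos (n + 1)]
    _ = _ := by
        rw [← ENNReal.ofReal_mul (by positivity), ← ENNReal.ofReal_mul (by positivity), mul_assoc]

lemma ofReal_mul_le_setLIntegral_Ioc_succ (hs : IsHalvingSeq ω s) (hd : d ≠ 0)
    (hω_mono : StrictMonoOn ω (Ici 0)) (hω_dec : AntitoneOn (fun t : ℝ => ω t / t ^ d) (Ioi 0))
    {p : ℝ} (hp : 0 ≤ p) (n : ℕ) :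
    ENNReal.ofReal (1 - 2 ^ (-(1 / d : ℝ))) * ENNReal.ofReal (ω (s n) ^ (-p) * s n) ≤
      ∫⁻ t in Ioc (s (n + 1)) (s n), ENNReal.ofReal (ω t ^ (-p)) := by
  have hc : 0 ≤ ω (s n) ^ (-p) := Real.rpow_nonneg (hs.pos_comp n).le _
  have hbound : ∀ t ∈ Ioc (s (n + 1)) (s n), ω (s n) ^ (-p) ≤ ω t ^ (-p) := by
    intro t ht
    have ht0 : 0 < t := (hs.pos _).trans ht.1
    exact Real.rpow_le_rpow_of_nonpos ((hs.pos_comp _).trans (hω_mono (hs.pos _).le ht0.le ht.1))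
      (hω_mono.monotoneOn ht0.le (hs.pos _).le ht.2) (neg_nonpos.2 hp)
  have hgap : (1 - 2 ^ (-(1 / d : ℝ))) * s n ≤ s n - s (n + 1) := by
    linarith [hs.succ_le_two_rpow_neg_mul hd hω_mono hω_dec n]
  calc _ = ENNReal.ofReal (ω (s n) ^ (-p) * ((1 - 2 ^ (-(1 / d : ℝ))) * s n)) := by
        rw [← ENNReal.ofReal_mul (sub_nonneg.2 (two_rpow_neg_one_div_lt_one hd).le)]
        ring_nf
    _ ≤ ENNReal.ofReal (ω (s n) ^ (-p) * (s n - s (n + 1))) := by gcongr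
    _ = ENNReal.ofReal (ω (s n) ^ (-p)) * ENNReal.ofReal (s n - s (n + 1)) :=
        ENNReal.ofReal_mul hc
    _ ≤ _ := ofReal_mul_le_setLIntegral_Ioc hbound

theorem summable_iff_setLIntegral_lt_top (hs : IsHalvingSeq ω s) (hd : d ≠ 0)
    (hω_mono : StrictMonoOn ω (Ici 0)) (hω_dec : AntitoneOn (fun t : ℝ => ω t / t ^ d) (Ioi 0))
    {p : ℝ} (hp : 0 ≤ p) :
    Summable (fun n => ω (s n) ^ (-p) * s n) ↔
      ∫⁻ t in Ioc 0 (s 0), ENNReal.ofReal (ω t ^ (-p)) < ∞ := by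
  rw [summable_iff_tsum_ofReal_lt_top fun n =>
      mul_nonneg (Real.rpow_nonneg (hs.pos_comp n).le _) (hs.pos n).le,
    (hs.antitone hω_mono).setLIntegral_Ioc_eq_tsum (hs.tendsto_zero hd hω_mono hω_dec)]
  exact (tsum_lt_top_iff_of_le_mul_of_le_mul
    (ENNReal.ofReal_pos.2 (sub_pos.2 (two_rpow_neg_one_div_lt_one hd))).ne' ENNReal.ofReal_ne_top
    (hs.ofReal_mul_le_setLIntegral_Ioc_succ hd hω_mono hω_dec hp)
    (hs.setLIntegral_Ioc_succ_le hω_mono hp)).symm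

end IsHalvingSeq

end Halving

lemma setLIntegral_Ioc_rpow_neg_lt_top {ω : ℝ → ℝ} (hω_mono : StrictMonoOn ω (Ici 0))
    (hω_zero : ω 0 = 0) {p : ℝ} (hp : 0 ≤ p) {a b : ℝ} (ha : 0 < a) :
    ∫⁻ t in Ioc a b, ENNReal.ofReal (ω t ^ (-p)) < ∞ := by
  have hωa : 0 < ω a := hω_zero ▸ hω_mono (le_refl (0 : ℝ)) ha.le ha
  have hbound : ∀ t ∈ Ioc a b, ω t ^ (-p) ≤ ω a ^ (-p) := fun t ht =>
    Real.rpow_le_rpow_of_nonpos hωa (hω_mono.monotoneOn ha.le (ha.trans ht.1).le ht.1.le)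
      (neg_nonpos.2 hp)
  exact (setLIntegral_Ioc_le_ofReal_mul hbound).trans_lt
    (ENNReal.mul_lt_top ENNReal.ofReal_lt_top ENNReal.ofReal_lt_top)

theorem summable_iff_integral_finite_general (d : ℕ) (hd : 2 ≤ d) (ω : ℝ → ℝ)
    (hω_mono : StrictMonoOn ω (Ici (0 : ℝ)))
    (hω_zero : ω 0 = 0)
    (hω_dec : AntitoneOn (fun t : ℝ => ω t / t ^ d) (Ioi (0 : ℝ)))
    (n₀ : ℕ) (r : ℕ → ℝ)
    (hr_pos : ∀ n, n₀ ≤ n → 0 < r n)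
    (hr : ∀ n, n₀ ≤ n → ω (r n) = 2 ^ (-((n : ℝ) + 1))) :
    (Summable fun n : ℕ => (2 : ℝ) ^ (((n + n₀ : ℕ) : ℝ) / d) * r (n + n₀)) ↔
      ∫⁻ t in Ioc (0 : ℝ) 1, ENNReal.ofReal (ω t ^ (-(1 / (d : ℝ)))) < ⊤ := by
  have hd₀ : d ≠ 0 := by omega
  have hωr (n : ℕ) : ω (r (n + n₀)) = 2 ^ (-(((n + n₀ : ℕ) : ℝ) + 1)) := hr _ (Nat.le_add_left _ _)
  have hs : IsHalvingSeq ω (fun n => r (n + n₀)) :=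
    { pos := fun n => hr_pos _ (Nat.le_add_left _ _)
      pos_comp := fun n => hωr n ▸ by positivity
      comp_eq_two_mul := fun n => by
        rw [hωr, hωr, show -(((n + n₀ : ℕ) : ℝ) + 1) = 1 + -(((n + 1 + n₀ : ℕ) : ℝ) + 1) by
          push_cast; ring, Real.rpow_add two_pos, Real.rpow_one] }
  have hterm (n : ℕ) : (2 : ℝ) ^ (((n + n₀ : ℕ) : ℝ) / d) * r (n + n₀) =
      2 ^ (-(1 / d : ℝ)) * (ω (r (n + n₀)) ^ (-(1 / d : ℝ)) * r (n + n₀)) := by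
    rw [hωr, ← Real.rpow_mul zero_le_two, ← mul_assoc, ← Real.rpow_add two_pos]
    field_simp
    ring_nf
  simp_rw [hterm]
  rw [summable_mul_left_iff (by positivity),
    hs.summable_iff_setLIntegral_lt_top hd₀ hω_mono hω_dec (by positivity)]
  exact setLIntegral_Ioc_lt_top_iff_of_uIoc
    (setLIntegral_Ioc_rpow_neg_lt_top hω_mono hω_zero (by positivity) (lt_min (hs.pos 0) one_pos))

/-- With `r_n` defined by `ω(r_n) = 2^{−(n+1)}`, the series `∑ 2^{n/d} r_n` converges
iff `∫_0^1 ω(r)^{−1/d} dr < ∞`. (The sum over `n ≥ n₀` is expressed by reindexing.) -/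
theorem summable_iff_integral_finite (d : ℕ) (hd : 2 ≤ d) (ω : ℝ → ℝ)
    (hω_nonneg : ∀ t : ℝ, 0 ≤ t → 0 ≤ ω t)
    (hω_cont : ContinuousOn ω (Ici (0 : ℝ)))
    (hω_mono : StrictMonoOn ω (Ici (0 : ℝ)))
    (hω_conv : ConvexOn ℝ (Ici (0 : ℝ)) ω)
    (hω_zero : ω 0 = 0)
    (hω_dec : AntitoneOn (fun t : ℝ => ω t / t ^ d) (Ioi (0 : ℝ)))
    (n₀ : ℕ) (r : ℕ → ℝ)
    (hr_pos : ∀ n, n₀ ≤ n → 0 < r n)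
    (hr : ∀ n, n₀ ≤ n → ω (r n) = 2 ^ (-((n : ℝ) + 1))) :
    (Summable fun n : ℕ => (2 : ℝ) ^ (((n + n₀ : ℕ) : ℝ) / d) * r (n + n₀)) ↔
      ∫⁻ t in Ioc (0 : ℝ) 1, ENNReal.ofReal (ω t ^ (-(1 / (d : ℝ)))) < ⊤ :=
  summable_iff_integral_finite_general d hd ω hω_mono hω_zero hω_dec n₀ r hr_pos hr
end
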